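/- arXiv:2010.13661 — 2 statements merged into one kernel-verified Lean document; each statement's English description precedes it below -/
import Mathlib

section
/- Let σ, τ be permutations of {1,…,n}, let k ≥ 0, and let ρ_1,…,ρ_k be permutations of {1,…,n}, all different from the identity, such that ρ_1⋯ρ_k = στ⁻¹, the subgroup generated by σ, τ, ρ_1,…,ρ_k acts transitively on {1,…,n}, and ∑_{i=1}^k ‖ρ_i‖ = #(σ) + #(τ) − 2. Then ‖στ⁻¹‖ = #(σ) + #(τ) − 2|Π({σ,τ})| (that is, the genus of the bipartite combinatorial map (σ,τ⁻¹) is zero), and consequently #(σ) + #(τ) − 2 = ‖στ⁻¹‖ + 2(|Π({σ,τ})| − 1). -/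
open Equiv Finset
open scoped Classical

namespace PaperHCIZ

variable {α : Type*}

/-- The partition of `α` into orbits of the subgroup generated by a set of permutations. -/
def orbitSetoid (S : Set (Equiv.Perm α)) : Setoid α where
  r x y := ∃ g ∈ Subgroup.closure S, g x = y
  iseqv := by
    refine ⟨fun x => ⟨1, Subgroup.one_mem _, rfl⟩, ?_, ?_⟩
    · rintro x y ⟨g, hg, rfl⟩
      exact ⟨g⁻¹, Subgroup.inv_mem _ hg, by simp⟩
    · rintro x y z ⟨g, hg, rfl⟩ ⟨h, hh, rfl⟩
      exact ⟨h * g, Subgroup.mul_mem _ hh hg, Equiv.Perm.mul_apply h g x⟩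

/-- `#(ν)`: the number of orbits (disjoint cycles, counting fixed points) of a permutation. -/
noncomputable def numOrbits (ν : Equiv.Perm α) : ℕ :=
  Nat.card (Quotient (orbitSetoid ({ν} : Set (Equiv.Perm α))))

/-- `‖ν‖ = |α| - #(ν)`: the minimal number of transpositions whose product is `ν`. -/
noncomputable def len (ν : Equiv.Perm α) : ℕ :=
  Nat.card α - numOrbits ν

/-- the number of blocks of a partition -/
noncomputable def numBlocks (π : Setoid α) : ℕ := Nat.card (Quotient π)

/-- `d_p(ν)`: the number of orbits of size `p`. -/
noncomputable def cycleCount (ν : Equiv.Perm α) (p : ℕ) : ℕ :=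
  Nat.card {q : Quotient (orbitSetoid ({ν} : Set (Equiv.Perm α))) //
    Nat.card {x : α // Quotient.mk (orbitSetoid ({ν} : Set (Equiv.Perm α))) x = q} = p}

/-- The restriction of a permutation to a block of a partition whose blocks it stabilizes
(junk value `1` if it does not stabilize the block). -/
noncomputable def blockRestrict (π : Setoid α) (ν : Equiv.Perm α) (q : Quotient π) :
    Equiv.Perm {x : α // Quotient.mk π x = q} :=
  if h : ∀ x : α, Quotient.mk π x = q ↔ Quotient.mk π (ν x) = q
  then ν.subtypePerm (fun x => (h x).symm) else 1

/-- A sequence of transpositions `(p₁ q₁), …, (pₘ qₘ)`, with `pᵢ < qᵢ`, having weakly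
monotone maxima `q₁ ≤ q₂ ≤ … ≤ qₘ`. -/
def IsMonotoneSeq {β : Type*} [LinearOrder β] (L : List (Equiv.Perm β)) : Prop :=
  ∃ pq : List (β × β),
    L = pq.map (fun x => Equiv.swap x.1 x.2) ∧
    (∀ x ∈ pq, x.1 < x.2) ∧
    List.Chain' (· ≤ ·) (pq.map Prod.snd)

/-- The multiset of orbit sizes of a permutation of a finite set. -/
noncomputable def orbitSizes {β : Type*} [Finite β] (ν : Equiv.Perm β) : Multiset ℕ :=
  letI : Fintype (Quotient (orbitSetoid ({ν} : Set (Equiv.Perm β)))) := Fintype.ofFinite _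
  (Finset.univ.val).map fun q : Quotient (orbitSetoid ({ν} : Set (Equiv.Perm β))) =>
    Nat.card {x : β // Quotient.mk (orbitSetoid ({ν} : Set (Equiv.Perm β))) x = q}

variable {n D : ℕ}

/-- The partition `Π(σ,τ)` into orbits of the subgroup generated by all `σ_c, τ_c`. -/
def jointSetoid (σ τ : Fin D → Equiv.Perm (Fin n)) : Setoid (Fin n) :=
  orbitSetoid (Set.range σ ∪ Set.range τ)

/-- `m_C(σ,τ;l,k)` -/
noncomputable def mC (σ τ : Fin D → Equiv.Perm (Fin n)) (l k : ℕ) : ℕ :=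
  Nat.card {ρ : Fin D → List (Equiv.Perm (Fin n)) //
    (∀ c, ∀ r ∈ ρ c, r ≠ 1) ∧
    (∀ c, (ρ c).prod = σ c * (τ c)⁻¹) ∧
    (∑ c, (ρ c).length) = k ∧
    (∑ c, ((ρ c).map len).sum) = l ∧
    orbitSetoid (Set.range σ ∪ Set.range τ ∪ ⋃ c, {r | r ∈ ρ c}) = ⊤}

/-- `p_C(σ,τ;l)` -/
noncomputable def pC (σ τ : Fin D → Equiv.Perm (Fin n)) (l : ℕ) : ℕ :=
  Nat.card {μ : Fin D → List (Equiv.Perm (Fin n)) //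
    (∀ c, IsMonotoneSeq (μ c)) ∧
    (∀ c, σ c = (μ c).prod * τ c) ∧
    (∑ c, (μ c).length) = l ∧
    orbitSetoid (Set.range σ ∪ Set.range τ ∪ ⋃ c, {r | r ∈ μ c}) = ⊤}

/-- `γ_l(ν;k)`: transitive proper factorizations of `ν` into `k` factors of total length `l`. -/
noncomputable def gammaK {β : Type*} (ν : Equiv.Perm β) (l k : ℕ) : ℕ :=
  Nat.card {ρ : List (Equiv.Perm β) //
    ρ.length = k ∧ (∀ r ∈ ρ, r ≠ 1) ∧ ρ.prod = ν ∧
    (ρ.map len).sum = l ∧ orbitSetoid {r | r ∈ ρ} = ⊤}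

/-- `γ_l(ν) = ∑_k (-1)^k γ_l(ν;k)` -/
noncomputable def gammaAlt {β : Type*} (ν : Equiv.Perm β) (l : ℕ) : ℤ :=
  ∑ k ∈ Finset.range (l + 1), (-1 : ℤ) ^ k * gammaK ν l k

/-- `p(ν;l)`: monotone factorizations of `ν` into `l` transpositions. -/
noncomputable def pNum {β : Type*} [LinearOrder β] (ν : Equiv.Perm β) (l : ℕ) : ℕ :=
  Nat.card {L : List (Equiv.Perm β) // L.length = l ∧ IsMonotoneSeq L ∧ L.prod = ν}

/-- `p_C(σ,τ;l)` in the one-color case `D = 1`. -/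
noncomputable def pC1 (σ τ : Equiv.Perm (Fin n)) (l : ℕ) : ℕ :=
  Nat.card {μ : List (Equiv.Perm (Fin n)) //
    μ.length = l ∧ IsMonotoneSeq μ ∧ σ = μ.prod * τ ∧
    orbitSetoid ({σ, τ} ∪ {r | r ∈ μ}) = ⊤}

/-- `m_C(σ,τ;l,k)` in the one-color case `D = 1`. -/
noncomputable def mC1 (σ τ : Equiv.Perm (Fin n)) (l k : ℕ) : ℕ :=
  Nat.card {ρ : List (Equiv.Perm (Fin n)) //
    ρ.length = k ∧ (∀ r ∈ ρ, r ≠ 1) ∧ ρ.prod = σ * τ⁻¹ ∧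
    (ρ.map len).sum = l ∧ orbitSetoid ({σ, τ} ∪ {r | r ∈ ρ}) = ⊤}

/-- `h_g(ν)`: genus-`g` monotone single Hurwitz count of a permutation of a finite
linearly ordered set. -/
noncomputable def hg {β : Type*} [LinearOrder β] (ν : Equiv.Perm β) (g : ℕ) : ℕ :=
  Nat.card {L : List (Equiv.Perm β) //
    L.length = Nat.card β + numOrbits ν + 2 * g - 2 ∧
    IsMonotoneSeq L ∧ L.prod = ν ∧ orbitSetoid {r | r ∈ L} = ⊤}






lemma orbitSetoid_rel_of_mem {S : Set (Perm α)} {g : Perm α}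
    (hg : g ∈ Subgroup.closure S) (x : α) : orbitSetoid S x (g x) :=
  ⟨g, hg, rfl⟩

lemma orbitSetoid_le {S : Set (Perm α)} {z : Setoid α}
    (h : ∀ g ∈ S, ∀ x, z x (g x)) : orbitSetoid S ≤ z := by
  have hsub : Subgroup.closure S ≤ {
      carrier := {g : Perm α | ∀ x, z x (g x)}
      one_mem' := fun x => z.refl x
      mul_mem' := by
        intro a b ha hb x
        exact z.trans (hb x) (ha (b x))
      inv_mem' := by
        intro a ha x
        have h1 := ha (a⁻¹ x)
        rw [show a (a⁻¹ x) = x by simp] at h1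
        exact z.symm h1 } := (Subgroup.closure_le _).mpr h
  refine Setoid.le_def.mpr ?_
  rintro x y ⟨g, hg, rfl⟩
  exact hsub hg x

lemma orbitSetoid_mono {S T : Set (Perm α)} (h : S ⊆ T) :
    orbitSetoid S ≤ orbitSetoid T :=
  orbitSetoid_le fun g hg x => ⟨g, Subgroup.subset_closure (h hg), rfl⟩

lemma orbitSetoid_singleton_rel {ν : Perm α} {x y : α} :
    orbitSetoid {ν} x y ↔ ν.SameCycle x y := by
  constructor
  · rintro ⟨g, hg, rfl⟩
    obtain ⟨n, rfl⟩ := Subgroup.mem_closure_singleton.mp hg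
    exact ⟨n, rfl⟩
  · rintro ⟨n, hn⟩
    exact ⟨ν ^ n, Subgroup.mem_closure_singleton.mpr ⟨n, rfl⟩, hn⟩

lemma orbitSetoid_one : orbitSetoid ({1} : Set (Perm α)) = ⊥ := by
  apply le_antisymm
  · refine Setoid.le_def.mpr ?_
    rintro x y ⟨g, hg, rfl⟩
    rw [Subgroup.closure_singleton_one, Subgroup.mem_bot] at hg
    subst hg
    rfl
  · exact bot_le

lemma prod_mem_closure (L : List (Perm α)) :
    L.prod ∈ Subgroup.closure {r : Perm α | r ∈ L} :=
  list_prod_mem fun x hx => Subgroup.subset_closure hx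

lemma orbitSetoid_inv (ν : Perm α) :
    orbitSetoid ({ν⁻¹} : Set (Perm α)) = orbitSetoid {ν} := by
  refine Setoid.ext fun x y => ?_
  show (∃ g ∈ Subgroup.closure {ν⁻¹}, g x = y) ↔ (∃ g ∈ Subgroup.closure {ν}, g x = y)
  rw [Subgroup.closure_singleton_inv]







lemma numBlocks_le_numBlocks [Finite α] {s t : Setoid α} (h : s ≤ t) :
    numBlocks t ≤ numBlocks s := by
  apply Nat.card_le_card_of_surjective
    (fun q : Quotient s => Quotient.map' id (fun a b hab => h hab) (q : Quotient s))
  rintro ⟨x⟩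
  exact ⟨Quotient.mk _ x, rfl⟩

lemma numBlocks_le_card [Finite α] (s : Setoid α) : numBlocks s ≤ Nat.card α := by
  exact Nat.card_le_card_of_surjective (Quotient.mk s) (fun q => q.exists_rep)

lemma numBlocks_bot [Finite α] : numBlocks (⊥ : Setoid α) = Nat.card α := by
  refine le_antisymm (numBlocks_le_card _) ?_
  apply Nat.card_le_card_of_injective (fun x : α => Quotient.mk ⊥ x)
  intro a b hab
  exact Quotient.eq''.mp hab

lemma numBlocks_top [Finite α] [Nonempty α] : numBlocks (⊤ : Setoid α) = 1 := by
  have : Subsingleton (Quotient (⊤ : Setoid α)) := by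
    constructor; rintro ⟨a⟩ ⟨b⟩; exact Quotient.sound trivial
  have : Nonempty (Quotient (⊤ : Setoid α)) := ⟨Quotient.mk _ (Classical.arbitrary α)⟩
  exact Nat.card_eq_one_iff_unique.mpr ⟨‹_›, ‹_›⟩

lemma one_le_numBlocks [Finite α] [Nonempty α] (s : Setoid α) : 1 ≤ numBlocks s := by
  have : Nonempty (Quotient s) := ⟨Quotient.mk _ (Classical.arbitrary α)⟩
  exact Nat.card_pos






lemma quotient_mk_eq_iff (s : Setoid α) (a b : α) :
    Quotient.mk s a = Quotient.mk s b ↔ s a b :=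
  ⟨Quotient.exact, Quotient.sound⟩

/-- The setoid obtained from `v` by merging the classes of `x` and `y`. -/
def mergeS (v : Setoid α) (x y : α) : Setoid α where
  r p q := v p q ∨ (v p x ∧ v y q) ∨ (v p y ∧ v x q)
  iseqv := by
    constructor
    · intro p; exact Or.inl (v.refl p)
    · intro p q h
      rcases h with h | ⟨h1, h2⟩ | ⟨h1, h2⟩
      · exact Or.inl (v.symm h)
      · exact Or.inr (Or.inr ⟨v.symm h2, v.symm h1⟩)
      · exact Or.inr (Or.inl ⟨v.symm h2, v.symm h1⟩)
    · intro p q s h1 h2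
      rcases h1 with h | ⟨ha, hb⟩ | ⟨ha, hb⟩ <;>
        rcases h2 with h' | ⟨hc, hd⟩ | ⟨hc, hd⟩
      · exact Or.inl (v.trans h h')
      · exact Or.inr (Or.inl ⟨v.trans h hc, hd⟩)
      · exact Or.inr (Or.inr ⟨v.trans h hc, hd⟩)
      · exact Or.inr (Or.inl ⟨ha, v.trans hb h'⟩)
      · exact Or.inl (v.trans (v.trans ha (v.symm (v.trans hb hc))) hd)
      · exact Or.inl (v.trans ha hd)
      · exact Or.inr (Or.inr ⟨ha, v.trans hb h'⟩)
      · exact Or.inl (v.trans ha hd)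
      · exact Or.inl (v.trans (v.trans ha (v.symm (v.trans hb hc))) hd)

lemma le_mergeS (v : Setoid α) (x y : α) : v ≤ mergeS v x y :=
  Setoid.le_def.mpr fun h => Or.inl h

lemma mergeS_rel (v : Setoid α) (x y : α) : mergeS v x y x y :=
  Or.inr (Or.inl ⟨v.refl x, v.refl y⟩)

lemma mergeS_le {v z : Setoid α} {x y : α} (hvz : v ≤ z) (hxy : z x y) :
    mergeS v x y ≤ z := by
  refine Setoid.le_def.mpr ?_
  rintro p q (h | ⟨h1, h2⟩ | ⟨h1, h2⟩)
  · exact hvz h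
  · exact z.trans (hvz h1) (z.trans hxy (hvz h2))
  · exact z.trans (hvz h1) (z.trans (z.symm hxy) (hvz h2))

lemma mergeS_eq_of_rel {v : Setoid α} {x y : α} (h : v x y) : mergeS v x y = v :=
  le_antisymm (mergeS_le le_rfl h) (le_mergeS v x y)


lemma numBlocks_le_mergeS_add_one [Finite α] (v : Setoid α) (x y : α) :
    numBlocks v ≤ numBlocks (mergeS v x y) + 1 := by
  classical
  set m := mergeS v x y with hm
  have wd : ∀ p q : α, v p q →
      (if v p y then (Sum.inr Unit.unit : Quotient m ⊕ Unit) else Sum.inl (Quotient.mk m p))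
      = (if v q y then Sum.inr Unit.unit else Sum.inl (Quotient.mk m q)) := by
    intro p q hpq
    split_ifs with h1 h2 h2
    · rfl
    · exact absurd (v.trans (v.symm hpq) h1) h2
    · exact absurd (v.trans hpq h2) h1
    · exact congrArg _ (Quotient.sound (Or.inl hpq))
  have hinj : Function.Injective (Quotient.lift _ wd : Quotient v → Quotient m ⊕ Unit) := by
    intro a b hpq
    obtain ⟨p, rfl⟩ := a.exists_rep
    obtain ⟨q, rfl⟩ := b.exists_rep
    rw [Quotient.lift_mk, Quotient.lift_mk] at hpq
    apply Quotient.sound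
    split_ifs at hpq with h1 h2 h2
    · exact v.trans h1 (v.symm h2)
    · injection hpq with hh
      rcases (quotient_mk_eq_iff m p q).mp hh with h | ⟨ha, hb⟩ | ⟨ha, hb⟩
      · exact h
      · exact absurd (v.symm hb) h2
      · exact absurd ha h1
  have := Nat.card_le_card_of_injective _ hinj
  simpa [numBlocks, Nat.card_sum] using this

lemma mergeS_numBlocks_add_one_le [Finite α] {v : Setoid α} {x y : α} (hxy : ¬ v x y) :
    numBlocks (mergeS v x y) + 1 ≤ numBlocks v := by
  classical
  set m := mergeS v x y with hm
  have houty : ∀ c : Quotient m, v c.out y → c = Quotient.mk m y := by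
    intro c h
    rw [← c.out_eq]
    exact Quotient.sound (Or.inl h)
  set g : Quotient m ⊕ Unit → Quotient v := Sum.elim
    (fun c => if c = Quotient.mk m y then Quotient.mk v x else Quotient.mk v c.out)
    (fun _ => Quotient.mk v y) with hg
  have hinj : Function.Injective g := by
    rintro (c1 | u1) (c2 | u2) h
    · simp only [hg, Sum.elim_inl] at h
      congr 1
      split_ifs at h with h1 h2 h2
      · rw [h1, h2]
      · exfalso
        have hvx : v x c2.out := (quotient_mk_eq_iff v _ _).mp h
        exact h2 (by rw [← c2.out_eq]
                     exact Quotient.sound (Or.inr (Or.inl ⟨v.symm hvx, v.refl y⟩)))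
      · exfalso
        have hvx : v c1.out x := (quotient_mk_eq_iff v _ _).mp h
        exact h1 (by rw [← c1.out_eq]
                     exact Quotient.sound (Or.inr (Or.inl ⟨hvx, v.refl y⟩)))
      · have hvv : v c1.out c2.out := (quotient_mk_eq_iff v _ _).mp h
        calc c1 = Quotient.mk m c1.out := c1.out_eq.symm
        _ = Quotient.mk m c2.out := Quotient.sound (Or.inl hvv)
        _ = c2 := c2.out_eq
    · exfalso
      simp only [hg, Sum.elim_inl, Sum.elim_inr] at h
      split_ifs at h with h1
      · exact hxy ((quotient_mk_eq_iff v _ _).mp h)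
      · exact h1 (houty c1 ((quotient_mk_eq_iff v _ _).mp h))
    · exfalso
      simp only [hg, Sum.elim_inl, Sum.elim_inr] at h
      split_ifs at h with h2
      · exact hxy (v.symm ((quotient_mk_eq_iff v _ _).mp h))
      · exact h2 (houty c2 (v.symm ((quotient_mk_eq_iff v _ _).mp h)))
    · cases u1; cases u2; rfl
  have := Nat.card_le_card_of_injective _ hinj
  simpa [numBlocks, Nat.card_sum] using this

lemma orbitSetoid_insert_swap (a b : α) (S : Set (Perm α)) :
    orbitSetoid (insert (Equiv.swap a b) S) = mergeS (orbitSetoid S) a b := by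
  classical
  apply le_antisymm
  · apply orbitSetoid_le
    rintro g (rfl | hg) x
    · by_cases hxa : x = a
      · rw [hxa, Equiv.swap_apply_left]
        exact mergeS_rel _ _ _
      · by_cases hxb : x = b
        · rw [hxb]
          rw [Equiv.swap_apply_right]
          exact (mergeS (orbitSetoid S) a b).symm (mergeS_rel _ _ _)
        · rw [Equiv.swap_apply_of_ne_of_ne hxa hxb]
    · exact le_mergeS _ a b ⟨g, Subgroup.subset_closure hg, rfl⟩
  · apply mergeS_le
    · exact orbitSetoid_mono (Set.subset_insert _ _)
    · exact ⟨Equiv.swap a b, Subgroup.subset_closure (Set.mem_insert _ _),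
        Equiv.swap_apply_left a b⟩


lemma numOrbits_eq_numBlocks (ν : Perm α) :
    numOrbits ν = numBlocks (orbitSetoid ({ν} : Set (Perm α))) := rfl

lemma numOrbits_one [Finite α] : numOrbits (1 : Perm α) = Nat.card α := by
  rw [numOrbits_eq_numBlocks, orbitSetoid_one, numBlocks_bot]

lemma numOrbits_le_card [Finite α] (ν : Perm α) : numOrbits ν ≤ Nat.card α :=
  numBlocks_le_card _

lemma numOrbits_inv (ν : Perm α) : numOrbits ν⁻¹ = numOrbits ν := by
  rw [numOrbits_eq_numBlocks, numOrbits_eq_numBlocks, orbitSetoid_inv]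

lemma orbitSetoid_eq_of_closure_eq {S T : Set (Perm α)}
    (h : Subgroup.closure S = Subgroup.closure T) : orbitSetoid S = orbitSetoid T :=
  Setoid.ext fun x y => by
    show (∃ g ∈ Subgroup.closure S, g x = y) ↔ (∃ g ∈ Subgroup.closure T, g x = y)
    rw [h]

lemma closure_pair_swap_mul (w ν : Perm α) (hw : w * w = 1) :
    Subgroup.closure ({w, w * ν} : Set (Perm α)) = Subgroup.closure {w, ν} := by
  apply le_antisymm
  · rw [Subgroup.closure_le]
    rintro g (rfl | rfl)
    · exact Subgroup.subset_closure (Set.mem_insert _ _)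
    · exact Subgroup.mul_mem _ (Subgroup.subset_closure (Set.mem_insert _ _))
        (Subgroup.subset_closure (Set.mem_insert_of_mem _ rfl))
  · rw [Subgroup.closure_le]
    rintro g (rfl | rfl)
    · exact Subgroup.subset_closure (Set.mem_insert _ _)
    · have hmem : w * (w * g) ∈ Subgroup.closure ({w, w * g} : Set (Perm α)) :=
        Subgroup.mul_mem _ (Subgroup.subset_closure (Set.mem_insert _ _))
          (Subgroup.subset_closure (Set.mem_insert_of_mem _ rfl))
      rwa [← mul_assoc, hw, one_mul] at hmem

lemma mergeS_orbit_swap_mul (ν : Perm α) (a b : α) :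
    mergeS (orbitSetoid ({Equiv.swap a b * ν} : Set (Perm α))) a b
      = mergeS (orbitSetoid ({ν} : Set (Perm α))) a b := by
  rw [← orbitSetoid_insert_swap, ← orbitSetoid_insert_swap]
  exact orbitSetoid_eq_of_closure_eq
    (closure_pair_swap_mul (Equiv.swap a b) ν (Equiv.swap_mul_self a b))

lemma numOrbits_swap_mul_le [Finite α] (ν : Perm α) (a b : α) :
    numOrbits (Equiv.swap a b * ν) ≤ numOrbits ν + 1 := by
  calc numOrbits (Equiv.swap a b * ν)
      ≤ numBlocks (mergeS (orbitSetoid ({Equiv.swap a b * ν} : Set (Perm α))) a b) + 1 :=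
        numBlocks_le_mergeS_add_one _ _ _
    _ = numBlocks (mergeS (orbitSetoid ({ν} : Set (Perm α))) a b) + 1 := by
        rw [mergeS_orbit_swap_mul]
    _ ≤ numOrbits ν + 1 :=
        Nat.add_le_add_right (numBlocks_le_numBlocks (le_mergeS _ a b)) 1

lemma sameCycle_swap_mul [Finite α] {ν : Perm α} {a b : α} (hab : a ≠ b)
    (h : ¬ ν.SameCycle a b) : (Equiv.swap a b * ν).SameCycle a b := by
  classical
  set r := Function.minimalPeriod ν a with hr
  have hper : Function.IsPeriodicPt (⇑ν) r a := Function.isPeriodicPt_minimalPeriod (⇑ν) a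
  have hord : Function.IsPeriodicPt (⇑ν) (orderOf ν) a := by
    show (⇑ν)^[orderOf ν] a = a
    rw [Equiv.Perm.iterate_eq_pow, pow_orderOf_eq_one]
    rfl
  have hrpos : 0 < r := hord.minimalPeriod_pos (orderOf_pos ν)
  have key : ∀ j, j < r → ((Equiv.swap a b * ν) ^ j) a = (ν ^ j) a := by
    intro j hj
    induction j with
    | zero => simp
    | succ i ih =>
      have hi : ((Equiv.swap a b * ν) ^ i) a = (ν ^ i) a :=
        ih (lt_trans (Nat.lt_succ_self i) hj)
      have hne_a : (ν ^ (i + 1)) a ≠ a := by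
        intro hcon
        have hp : Function.IsPeriodicPt (⇑ν) (i + 1) a := by
          show (⇑ν)^[i+1] a = a
          rw [Equiv.Perm.iterate_eq_pow]
          exact hcon
        exact absurd (hp.minimalPeriod_le (Nat.succ_pos i)) (not_le.mpr hj)
      have hne_b : (ν ^ (i + 1)) a ≠ b := by
        intro hcon
        exact h ⟨((i : ℤ) + 1), by
          rw [show ((i : ℤ) + 1) = ((i + 1 : ℕ) : ℤ) by push_cast; ring, zpow_natCast]
          exact hcon⟩
      have e1 : ((Equiv.swap a b * ν) ^ (i + 1)) a = Equiv.swap a b (ν ((ν ^ i) a)) := by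
        rw [pow_succ', Equiv.Perm.mul_apply, hi, Equiv.Perm.mul_apply]
      have e2 : ν ((ν ^ i) a) = (ν ^ (i + 1)) a := by
        rw [pow_succ', Equiv.Perm.mul_apply]
      rw [e1, e2]
      exact Equiv.swap_apply_of_ne_of_ne hne_a hne_b
  have hend : ((Equiv.swap a b * ν) ^ r) a = b := by
    obtain ⟨i, hri⟩ : ∃ i, r = i + 1 := ⟨r - 1, (Nat.succ_pred_eq_of_pos hrpos).symm⟩
    rw [hri]
    have hi : ((Equiv.swap a b * ν) ^ i) a = (ν ^ i) a :=
      key i (by rw [hri]; exact Nat.lt_succ_self i)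
    have hnu : ν ((ν ^ i) a) = a := by
      have : (ν ^ (i+1)) a = a := by
        have hthis := hper
        rw [Function.IsPeriodicPt, Function.IsFixedPt, Equiv.Perm.iterate_eq_pow, hri] at hthis
        exact hthis
      rwa [pow_succ', Equiv.Perm.mul_apply] at this
    rw [pow_succ', Equiv.Perm.mul_apply, hi, Equiv.Perm.mul_apply, hnu,
      Equiv.swap_apply_left]
  exact ⟨(r : ℤ), by rw [zpow_natCast]; exact hend⟩

lemma numOrbits_swap_mul_add_one_le [Finite α] {ν : Perm α} {a b : α} (hab : a ≠ b)
    (h : ¬ ν.SameCycle a b) :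
    numOrbits (Equiv.swap a b * ν) + 1 ≤ numOrbits ν := by
  have hsc : (Equiv.swap a b * ν).SameCycle a b := sameCycle_swap_mul hab h
  have h1 : mergeS (orbitSetoid ({Equiv.swap a b * ν} : Set (Perm α))) a b
      = orbitSetoid ({Equiv.swap a b * ν} : Set (Perm α)) :=
    mergeS_eq_of_rel (orbitSetoid_singleton_rel.mpr hsc)
  have h2 : ¬ (orbitSetoid ({ν} : Set (Perm α))) a b :=
    fun hc => h (orbitSetoid_singleton_rel.mp hc)
  calc numOrbits (Equiv.swap a b * ν) + 1
      = numBlocks (mergeS (orbitSetoid ({ν} : Set (Perm α))) a b) + 1 := by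
        rw [numOrbits_eq_numBlocks, ← h1, mergeS_orbit_swap_mul]
    _ ≤ numOrbits ν := mergeS_numBlocks_add_one_le h2

lemma orbitSetoid_empty : orbitSetoid (∅ : Set (Perm α)) = ⊥ := by
  apply le_antisymm
  · refine Setoid.le_def.mpr ?_
    rintro x y ⟨g, hg, rfl⟩
    rw [Subgroup.closure_empty, Subgroup.mem_bot] at hg
    subst hg
    rfl
  · exact bot_le

lemma orbitSetoid_prod_le (L : List (Perm α)) :
    orbitSetoid ({L.prod} : Set (Perm α)) ≤ orbitSetoid {r : Perm α | r ∈ L} :=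
  orbitSetoid_le fun g hg x => by
    rw [Set.mem_singleton_iff] at hg
    subst hg
    exact ⟨L.prod, prod_mem_closure L, rfl⟩

lemma master [Finite α] (L : List (Perm α))
    (hL : ∀ x ∈ L, ∃ a b : α, a ≠ b ∧ x = Equiv.swap a b) :
    Nat.card α + numOrbits L.prod ≤
      L.length + 2 * numBlocks (orbitSetoid {r : Perm α | r ∈ L}) := by
  classical
  induction L with
  | nil =>
    have h1 : ({r : Perm α | r ∈ ([] : List (Perm α))}) = (∅ : Set (Perm α)) := by
      ext r; simp
    rw [List.prod_nil, numOrbits_one, h1, orbitSetoid_empty, numBlocks_bot,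
      List.length_nil]
    omega
  | cons t L' ih =>
    obtain ⟨a, b, hab, rfl⟩ := hL t List.mem_cons_self
    have ihh := ih (fun x hx => hL x (List.mem_cons_of_mem _ hx))
    have hset : {r : Perm α | r ∈ (Equiv.swap a b :: L')}
        = insert (Equiv.swap a b) {r : Perm α | r ∈ L'} := by
      ext r; simp [List.mem_cons]
    rw [hset, orbitSetoid_insert_swap, List.prod_cons, List.length_cons]
    by_cases hc : (L'.prod).SameCycle a b
    · have hs' : orbitSetoid {r : Perm α | r ∈ L'} a b :=
        Setoid.le_def.mp (orbitSetoid_prod_le L') (orbitSetoid_singleton_rel.mpr hc)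
      have hme : mergeS (orbitSetoid {r : Perm α | r ∈ L'}) a b
          = orbitSetoid {r : Perm α | r ∈ L'} := mergeS_eq_of_rel hs'
      have hp1 : numOrbits (Equiv.swap a b * L'.prod) ≤ numOrbits L'.prod + 1 :=
        numOrbits_swap_mul_le _ a b
      rw [hme]
      omega
    · have hp2 : numOrbits (Equiv.swap a b * L'.prod) + 1 ≤ numOrbits L'.prod :=
        numOrbits_swap_mul_add_one_le hab hc
      have hm1 : numBlocks (orbitSetoid {r : Perm α | r ∈ L'})
          ≤ numBlocks (mergeS (orbitSetoid {r : Perm α | r ∈ L'}) a b) + 1 :=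
        numBlocks_le_mergeS_add_one _ a b
      omega


lemma numBlocks_add_one_le_of_rel [Finite α] {s : Setoid α} {x y : α} (hxy : x ≠ y)
    (h : s x y) : numBlocks s + 1 ≤ Nat.card α := by
  have hbot : ¬ (⊥ : Setoid α) x y := by
    rw [show ((⊥ : Setoid α) x y) = (x = y) from congrFun (congrFun Setoid.bot_def x) y]
    exact hxy
  have h1 : mergeS ⊥ x y ≤ s := mergeS_le bot_le h
  have h2 : numBlocks s ≤ numBlocks (mergeS ⊥ x y) := numBlocks_le_numBlocks h1
  have h3 : numBlocks (mergeS (⊥ : Setoid α) x y) + 1 ≤ numBlocks (⊥ : Setoid α) :=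
    mergeS_numBlocks_add_one_le hbot
  rw [numBlocks_bot] at h3
  omega

lemma exists_swap_decomp_aux [Finite α] :
    ∀ k (ν : Perm α), Nat.card α ≤ numOrbits ν + k →
    ∃ L : List (Perm α), (∀ x ∈ L, ∃ a b : α, a ≠ b ∧ x = Equiv.swap a b) ∧
      L.prod = ν ∧ L.length + numOrbits ν = Nat.card α := by
  intro k
  induction k with
  | zero =>
    intro ν hk
    by_cases h1 : ν = 1
    · subst h1
      exact ⟨[], by simp, by simp, by rw [List.length_nil, numOrbits_one]; omega⟩
    · exfalso
      obtain ⟨a, ha⟩ : ∃ a, ν a ≠ a := by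
        by_contra hcon
        push_neg at hcon
        exact h1 (Equiv.ext hcon)
      have hrel : orbitSetoid ({ν} : Set (Perm α)) a (ν a) :=
        ⟨ν, Subgroup.subset_closure rfl, rfl⟩
      have := numBlocks_add_one_le_of_rel (Ne.symm ha) hrel
      rw [← numOrbits_eq_numBlocks] at this
      omega
  | succ k ihk =>
    intro ν hk
    by_cases h1 : ν = 1
    · subst h1
      exact ⟨[], by simp, by simp, by rw [List.length_nil, numOrbits_one]; omega⟩
    · obtain ⟨a, ha⟩ : ∃ a, ν a ≠ a := by
        by_contra hcon
        push_neg at hcon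
        exact h1 (Equiv.ext hcon)
      have hab : a ≠ ν a := Ne.symm ha
      set b := ν a with hb
      set ν' := Equiv.swap a b * ν with hν'
      have hfix : ν' a = a := by
        rw [hν', Equiv.Perm.mul_apply, ← hb, Equiv.swap_apply_right]
      have hnsc : ¬ ν'.SameCycle a b := by
        rintro ⟨i, hi⟩
        rw [Equiv.Perm.zpow_apply_eq_self_of_apply_eq_self hfix i] at hi
        exact hab hi
      have hback : Equiv.swap a b * ν' = ν := by
        rw [hν', ← mul_assoc, Equiv.swap_mul_self, one_mul]
      have hp2 : numOrbits (Equiv.swap a b * ν') + 1 ≤ numOrbits ν' :=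
        numOrbits_swap_mul_add_one_le hab hnsc
      rw [hback] at hp2
      have hp1 : numOrbits ν' ≤ numOrbits ν + 1 := numOrbits_swap_mul_le ν a b
      obtain ⟨L', hsw, hprod, hlen⟩ := ihk ν' (by omega)
      refine ⟨Equiv.swap a b :: L', ?_, ?_, ?_⟩
      · intro x hx
        rcases List.mem_cons.mp hx with rfl | hx
        · exact ⟨a, b, hab, rfl⟩
        · exact hsw x hx
      · rw [List.prod_cons, hprod, hback]
      · rw [List.length_cons]
        omega

lemma exists_swap_decomp [Finite α] (ν : Perm α) :
    ∃ L : List (Perm α), (∀ x ∈ L, ∃ a b : α, a ≠ b ∧ x = Equiv.swap a b) ∧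
      L.prod = ν ∧ L.length + numOrbits ν = Nat.card α :=
  exists_swap_decomp_aux (Nat.card α) ν (by omega)

lemma exists_swap_decomp_list [Finite α] (ρ : List (Perm α)) :
    ∃ L : List (Perm α), (∀ x ∈ L, ∃ a b : α, a ≠ b ∧ x = Equiv.swap a b) ∧
      L.prod = ρ.prod ∧
      L.length = (ρ.map len).sum ∧
      (∀ r ∈ ρ, r ∈ Subgroup.closure {x : Perm α | x ∈ L}) := by
  induction ρ with
  | nil => exact ⟨[], by simp, by simp, by simp, by simp⟩
  | cons r ρ' ih =>
    obtain ⟨L', hsw', hprod', hlen', hmem'⟩ := ih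
    obtain ⟨S, hswS, hprodS, hlenS⟩ := exists_swap_decomp r
    refine ⟨S ++ L', ?_, ?_, ?_, ?_⟩
    · intro x hx
      rcases List.mem_append.mp hx with hx | hx
      · exact hswS x hx
      · exact hsw' x hx
    · rw [List.prod_append, hprodS, hprod', List.prod_cons]
    · rw [List.length_append, List.map_cons, List.sum_cons, hlen']
      have h1 : numOrbits r ≤ Nat.card α := numOrbits_le_card r
      have h2 : len r = Nat.card α - numOrbits r := rfl
      omega
    · intro x hx
      have hmono : Subgroup.closure {y : Perm α | y ∈ L'}
          ≤ Subgroup.closure {y : Perm α | y ∈ S ++ L'} :=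
        Subgroup.closure_mono (fun y hy => List.mem_append.mpr (Or.inr hy))
      have hmonoS : Subgroup.closure {y : Perm α | y ∈ S}
          ≤ Subgroup.closure {y : Perm α | y ∈ S ++ L'} :=
        Subgroup.closure_mono (fun y hy => List.mem_append.mpr (Or.inl hy))
      rcases List.mem_cons.mp hx with rfl | hx
      · exact hmonoS (by rw [← hprodS]; exact prod_mem_closure S)
      · exact hmono (hmem' x hx)

lemma joint_blocks_le [Finite α] [Nonempty α] :
    ∀ N (u v w : Setoid α), numBlocks v ≤ N → w ≤ u → w ≤ v →
    (∀ z : Setoid α, u ≤ z → v ≤ z → z = ⊤) →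
    numBlocks u + numBlocks v ≤ numBlocks w + 1 := by
  intro N
  induction N with
  | zero =>
    intro u v w hN _ _ _
    have := one_le_numBlocks v
    omega
  | succ N ihN =>
    intro u v w hN hwu hwv hz
    by_cases hle : u ≤ v
    · have hvtop : v = ⊤ := hz v hle le_rfl
      have h1 : numBlocks u ≤ numBlocks w := numBlocks_le_numBlocks hwu
      rw [hvtop, numBlocks_top]
      omega
    · obtain ⟨x, y, hxyu, hxyv⟩ : ∃ x y, u x y ∧ ¬ v x y := by
        by_contra hcon
        push_neg at hcon
        exact hle (Setoid.le_def.mpr fun {x y} h => hcon x y h)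
      have hxyne : x ≠ y := fun h => hxyv (h ▸ v.refl x)
      have hwxy : ¬ w x y := fun h => hxyv (Setoid.le_def.mp hwv h)
      have hwv' : mergeS w x y ≤ mergeS v x y :=
        mergeS_le (hwv.trans (le_mergeS v x y)) (mergeS_rel v x y)
      have hwu' : mergeS w x y ≤ u := mergeS_le hwu hxyu
      have hz' : ∀ z : Setoid α, u ≤ z → mergeS v x y ≤ z → z = ⊤ :=
        fun z hu hv' => hz z hu ((le_mergeS v x y).trans hv')
      have hdec : numBlocks (mergeS v x y) + 1 ≤ numBlocks v :=
        mergeS_numBlocks_add_one_le hxyv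
      have ih := ihN u (mergeS v x y) (mergeS w x y) (by omega) hwu' hwv' hz'
      have h4 : numBlocks v ≤ numBlocks (mergeS v x y) + 1 :=
        numBlocks_le_mergeS_add_one v x y
      have h5 : numBlocks (mergeS w x y) + 1 ≤ numBlocks w :=
        mergeS_numBlocks_add_one_le hwxy
      omega


/-- a transitive proper factorization of `στ⁻¹` of total length
`#(σ)+#(τ)−2` forces the bipartite map `(σ,τ⁻¹)` to have genus zero, i.e.
`‖στ⁻¹‖ = #(σ)+#(τ)−2|Π({σ,τ})|`, whence `#(σ)+#(τ)−2 = ‖στ⁻¹‖+2(|Π({σ,τ})|−1)`. -/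
theorem statement11 {n : ℕ} (hn : 1 ≤ n) (σ τ : Equiv.Perm (Fin n))
    (ρ : List (Equiv.Perm (Fin n)))
    (h1 : ∀ r ∈ ρ, r ≠ 1) (h2 : ρ.prod = σ * τ⁻¹)
    (h3 : orbitSetoid (({σ, τ} : Set (Equiv.Perm (Fin n))) ∪ {r | r ∈ ρ}) = ⊤)
    (h4 : ((ρ.map len).sum : ℤ) = (numOrbits σ : ℤ) + numOrbits τ - 2) :
    (len (σ * τ⁻¹) : ℤ) = (numOrbits σ : ℤ) + numOrbits τ
        - 2 * numBlocks (orbitSetoid ({σ, τ} : Set (Equiv.Perm (Fin n)))) ∧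
    (numOrbits σ : ℤ) + numOrbits τ - 2 =
      (len (σ * τ⁻¹) : ℤ)
        + 2 * ((numBlocks (orbitSetoid ({σ, τ} : Set (Equiv.Perm (Fin n)))) : ℤ) - 1) := by
  classical
  have hne : Nonempty (Fin n) := ⟨⟨0, hn⟩⟩
  set ν := σ * τ⁻¹ with hν
  set v := orbitSetoid ({σ, τ} : Set (Equiv.Perm (Fin n))) with hv
  set B := numBlocks v with hB
  set N := Nat.card (Fin n) with hN
  -- σ and τ are in the closure of {σ, τ}
  have hσv : σ ∈ Subgroup.closure ({σ, τ} : Set (Equiv.Perm (Fin n))) :=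
    Subgroup.subset_closure (Set.mem_insert _ _)
  have hτv : τ ∈ Subgroup.closure ({σ, τ} : Set (Equiv.Perm (Fin n))) :=
    Subgroup.subset_closure (Set.mem_insert_of_mem _ rfl)
  -- Chain A : the genus of the map (σ, τ⁻¹) is nonnegative
  obtain ⟨Lσ, hswσ, hprodσ, hlenσ⟩ := exists_swap_decomp σ
  obtain ⟨Lτ, hswτ, hprodτ, hlenτ⟩ := exists_swap_decomp τ⁻¹
  have hprodA : (Lσ ++ Lτ).prod = ν := by
    rw [List.prod_append, hprodσ, hprodτ]
  have masterA := master (Lσ ++ Lτ)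
    (fun x hx => (List.mem_append.mp hx).elim (hswσ x) (hswτ x))
  rw [hprodA, List.length_append] at masterA
  have hvleA : v ≤ orbitSetoid {r : Perm (Fin n) | r ∈ Lσ ++ Lτ} := by
    apply orbitSetoid_le
    intro g hg x
    have hmonoσ : Subgroup.closure {y : Perm (Fin n) | y ∈ Lσ}
        ≤ Subgroup.closure {y : Perm (Fin n) | y ∈ Lσ ++ Lτ} :=
      Subgroup.closure_mono (fun y hy => List.mem_append.mpr (Or.inl hy))
    have hmonoτ : Subgroup.closure {y : Perm (Fin n) | y ∈ Lτ}
        ≤ Subgroup.closure {y : Perm (Fin n) | y ∈ Lσ ++ Lτ} :=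
      Subgroup.closure_mono (fun y hy => List.mem_append.mpr (Or.inr hy))
    rcases hg with rfl | hg
    · exact orbitSetoid_rel_of_mem
        (hmonoσ (by rw [← hprodσ]; exact prod_mem_closure Lσ)) x
    · rw [Set.mem_singleton_iff] at hg
      subst hg
      have : g⁻¹ ∈ Subgroup.closure {y : Perm (Fin n) | y ∈ Lσ ++ Lτ} :=
        hmonoτ (by rw [← hprodτ]; exact prod_mem_closure Lτ)
      have hmem := Subgroup.inv_mem _ this
      rw [inv_inv] at hmem
      exact orbitSetoid_rel_of_mem hmem x
  have hblA : numBlocks (orbitSetoid {r : Perm (Fin n) | r ∈ Lσ ++ Lτ}) ≤ B :=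
    numBlocks_le_numBlocks hvleA
  have hinvτ : numOrbits τ⁻¹ = numOrbits τ := numOrbits_inv τ
  -- now : chainA : numOrbits ν + numOrbits σ + numOrbits τ ≤ N + 2 * B
  have chainA : numOrbits ν + numOrbits σ + numOrbits τ ≤ N + 2 * B := by omega
  -- Chain B : the factorization forces genus ≤ 0
  obtain ⟨Lρ, hswρ, hprodρ, hlenρ, hmemρ⟩ := exists_swap_decomp_list ρ
  rw [h2] at hprodρ
  have masterB := master Lρ hswρ
  rw [hprodρ] at masterB
  set u := orbitSetoid {r : Perm (Fin n) | r ∈ Lρ} with hu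
  set w := orbitSetoid ({ν} : Set (Perm (Fin n))) with hw
  have hwu : w ≤ u := by
    apply orbitSetoid_le
    intro g hg x
    rw [Set.mem_singleton_iff] at hg
    subst hg
    exact orbitSetoid_rel_of_mem (by rw [← hprodρ]; exact prod_mem_closure Lρ) x
  have hwv : w ≤ v := by
    apply orbitSetoid_le
    intro g hg x
    rw [Set.mem_singleton_iff] at hg
    subst hg
    exact orbitSetoid_rel_of_mem
      (Subgroup.mul_mem _ hσv (Subgroup.inv_mem _ hτv)) x
  have hz : ∀ z : Setoid (Fin n), u ≤ z → v ≤ z → z = ⊤ := by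
    intro z huz hvz
    have htot : orbitSetoid (({σ, τ} : Set (Equiv.Perm (Fin n))) ∪ {r | r ∈ ρ}) ≤ z := by
      apply orbitSetoid_le
      intro g hg x
      rcases hg with hg | hg
      · exact Setoid.le_def.mp hvz
          (orbitSetoid_rel_of_mem (Subgroup.subset_closure hg) x)
      · exact Setoid.le_def.mp huz (orbitSetoid_rel_of_mem (hmemρ g hg) x)
    rw [h3] at htot
    exact le_antisymm le_top htot
  have hJ : numBlocks u + numBlocks v ≤ numBlocks w + 1 :=
    joint_blocks_le (numBlocks v) u v w le_rfl hwu hwv hz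
  have hMnat : (ρ.map len).sum + 2 = numOrbits σ + numOrbits τ := by
    have : ((ρ.map len).sum : ℤ) + 2 = (numOrbits σ : ℤ) + numOrbits τ := by linarith
    exact_mod_cast this
  have hwnum : numBlocks w = numOrbits ν := rfl
  have chainB : N + 2 * B ≤ numOrbits ν + numOrbits σ + numOrbits τ := by omega
  -- conclusion
  have hle : numOrbits ν ≤ N := numOrbits_le_card ν
  have hlen_def : len ν = N - numOrbits ν := rfl
  constructor
  · rw [hlen_def]
    omega
  · rw [hlen_def]
    omega


end PaperHCIZ
end

section
/- Let n ≥ 1 and let σ be a permutation of {1,…,n}. For a permutation ν of {1,…,n} and an integer l ≥ 0, let p(ν;l) denote the number of sequences of l transpositions of {1,…,n} with weakly monotone maxima whose product is ν. Then for every integer m ≥ 0: ∑_{ν ∈ S_n, ‖ν⁻¹σ‖ ≤ m} (−1)^{m − ‖ν⁻¹σ‖} p(ν; m − ‖ν⁻¹σ‖) equals 1 if σ is the identity and m = 0, and equals 0 otherwise. (Equivalently, as an identity of formal power series in one variable x: ∑_{ν ∈ S_n} ( ∑_{l≥0} (−1)^l p(ν;l) x^l ) · x^{‖ν⁻¹σ‖}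 = 1 if σ = id and = 0 otherwise.) -/
open Equiv Finset
open scoped Classical

namespace PaperHCIZ

variable {α : Type*}

variable {n D : ℕ}

theorem _root_.Equiv.Perm.inv_apply_self {β : Type*} (f : Equiv.Perm β) (x : β) : f⁻¹ (f x) = x :=
  Equiv.symm_apply_apply f x

theorem _root_.Equiv.Perm.apply_inv_self {β : Type*} (f : Equiv.Perm β) (x : β) : f (f⁻¹ x) = x :=
  Equiv.apply_symm_apply f x




section Part1
variable {n : ℕ}

lemma closure_fix {ν : Perm (Fin n)} {k : Fin n} (hk : ν k = k) {g : Perm (Fin n)}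
    (hg : g ∈ Subgroup.closure ({ν} : Set (Perm (Fin n)))) : g k = k := by
  induction hg using Subgroup.closure_induction with
  | mem x hx => rw [Set.mem_singleton_iff] at hx; subst hx; exact hk
  | one => rfl
  | mul x y hx hy ihx ihy => rw [Equiv.Perm.mul_apply, ihy, ihx]
  | inv x hx ih => nth_rewrite 1 [← ih]; exact Equiv.Perm.inv_apply_self x k

lemma orbit_rel_iff (ν : Perm (Fin n)) (x y : Fin n) :
    (Quotient.mk (orbitSetoid ({ν} : Set (Perm (Fin n)))) x =
      Quotient.mk (orbitSetoid ({ν} : Set (Perm (Fin n)))) y) ↔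
    ∃ g ∈ Subgroup.closure ({ν} : Set (Perm (Fin n))), g x = y :=
  ⟨fun h => Quotient.exact h, fun h => Quotient.sound h⟩

lemma numOrbits_mul_swap (μ : Perm (Fin n)) (k p : Fin n) (hk : μ k = k) (hpk : p ≠ k) :
    numOrbits (μ * Equiv.swap p k) + 1 = numOrbits μ := by
  classical
  set ν := μ * Equiv.swap p k with hν
  have hνp : ν p = k := by simp [hν, Equiv.Perm.mul_apply, hk]
  have hνk : ν k = μ p := by simp [hν, Equiv.Perm.mul_apply]
  have hνx : ∀ x, x ≠ p → x ≠ k → ν x = μ x := by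
    intro x h1 h2; simp [hν, Equiv.Perm.mul_apply, Equiv.swap_apply_of_ne_of_ne h1 h2]
  have hμpk : μ p ≠ k := fun h => hpk (μ.injective (h.trans hk.symm))
  set T := orbitSetoid ({μ} : Set (Perm (Fin n))) with hT
  set S := orbitSetoid ({ν} : Set (Perm (Fin n))) with hS
  set f : Fin n → Quotient T := fun x => Quotient.mk T (if x = k then p else x) with hf
  -- membership in classes of k
  have hTk : ∀ y : Fin n, Quotient.mk T y = Quotient.mk T k ↔ y = k := by
    intro y
    rw [orbit_rel_iff]
    constructor
    · rintro ⟨g, hg, hgy⟩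
      exact g.injective (hgy.trans (closure_fix hk hg).symm)
    · rintro rfl; exact ⟨1, Subgroup.one_mem _, rfl⟩
  have hfne : ∀ x, f x ≠ Quotient.mk T k := by
    intro x
    simp only [hf]
    split
    · exact fun h => hpk ((hTk _).mp h)
    · rename_i h; exact fun hh => h ((hTk _).mp hh)
  have hstep : ∀ x, f (ν x) = f x := by
    intro x
    rcases eq_or_ne x p with rfl | hxp
    · rw [hνp]; simp [hf, hpk]
    rcases eq_or_ne x k with rfl | hxk
    · rw [hνk]; simp only [hf, if_neg hμpk, if_pos rfl]
      exact Quotient.sound ⟨μ⁻¹, Subgroup.inv_mem _ (Subgroup.subset_closure rfl),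
        Equiv.Perm.inv_apply_self μ p⟩
    · rw [hνx x hxp hxk]
      have hμx : μ x ≠ k := fun h => hxk (μ.injective (h.trans hk.symm))
      simp only [hf, if_neg hμx, if_neg hxk]
      exact Quotient.sound ⟨μ⁻¹, Subgroup.inv_mem _ (Subgroup.subset_closure rfl),
        Equiv.Perm.inv_apply_self μ x⟩
  have hfg : ∀ g ∈ Subgroup.closure ({ν} : Set (Perm (Fin n))), ∀ x, f (g x) = f x := by
    intro g hg
    induction hg using Subgroup.closure_induction with
    | mem x hx => rw [Set.mem_singleton_iff] at hx; subst hx; exact hstep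
    | one => intro x; rfl
    | mul a b ha hb iha ihb => intro x; rw [Equiv.Perm.mul_apply, iha, ihb]
    | inv a ha ih => intro x; rw [← ih (a⁻¹ x), Equiv.Perm.apply_inv_self]
  have hcore : ∀ g ∈ Subgroup.closure ({μ} : Set (Perm (Fin n))), ∀ x, x ≠ k →
      Quotient.mk S x = Quotient.mk S (g x) := by
    intro g hg
    induction hg using Subgroup.closure_induction with
    | mem a ha =>
      rw [Set.mem_singleton_iff] at ha; subst ha
      intro x hx
      rcases eq_or_ne x p with rfl | hxp
      · exact Quotient.sound ⟨ν * ν, Subgroup.mul_mem _ (Subgroup.subset_closure rfl)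
          (Subgroup.subset_closure rfl), by rw [Equiv.Perm.mul_apply, hνp, hνk]⟩
      · rw [← hνx x hxp hx]
        exact Quotient.sound ⟨ν, Subgroup.subset_closure rfl, rfl⟩
    | one => intro x _; rfl
    | mul a b ha hb iha ihb =>
      intro x hx
      have hbk : b x ≠ k := fun h => hx (b.injective (h.trans (closure_fix hk hb).symm))
      rw [Equiv.Perm.mul_apply]
      exact (ihb x hx).trans (iha (b x) hbk)
    | inv a ha ih =>
      intro x hx
      have hak : a⁻¹ x ≠ k := fun h =>
        hx (by rw [← Equiv.Perm.apply_inv_self a x, h, closure_fix hk ha])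
      have := ih (a⁻¹ x) hak
      rw [Equiv.Perm.apply_inv_self] at this
      exact this.symm
  have hSx : ∀ x, Quotient.mk S x = Quotient.mk S (if x = k then p else x) := by
    intro x
    rcases eq_or_ne x k with rfl | hxk
    · rw [if_pos rfl]
      exact ((orbit_rel_iff ν p x).mpr ⟨ν, Subgroup.subset_closure rfl, hνp⟩).symm
    · rw [if_neg hxk]
  have hwd : ∀ (a b : Fin n), (S : Setoid (Fin n)) a b → f a = f b := by
    rintro a b ⟨g, hg, rfl⟩
    exact (hfg g hg a).symm
  set f0 : Quotient S → Quotient T := Quotient.lift f hwd with hf0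
  have hf0ne : ∀ s, ¬ f0 s = Quotient.mk T k := by
    intro s
    induction s using Quotient.ind with
    | _ a => exact hfne a
  set fbar : Quotient S → {q : Quotient T // ¬ q = Quotient.mk T k} := fun s =>
    ⟨f0 s, hf0ne s⟩ with hfbar
  have hbij : Function.Bijective fbar := by
    constructor
    · intro s t hst
      induction s using Quotient.ind with | _ x =>
      induction t using Quotient.ind with | _ y =>
      have hxy : f x = f y := congrArg Subtype.val hst
      simp only [hf] at hxy
      set x' := if x = k then p else x with hx'
      set y' := if y = k then p else y with hy'
      have hx'k : x' ≠ k := by rw [hx']; split; exact hpk; assumption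
      obtain ⟨g, hg, hgxy⟩ := Quotient.exact hxy
      calc Quotient.mk S x = Quotient.mk S x' := hSx x
        _ = Quotient.mk S (g x') := hcore g hg x' hx'k
        _ = Quotient.mk S y' := by rw [hgxy]
        _ = Quotient.mk S y := (hSx y).symm
    · rintro ⟨q, hq⟩
      induction q using Quotient.ind with | _ x =>
      have hx : x ≠ k := fun h => hq (by rw [h])
      refine ⟨Quotient.mk S x, ?_⟩
      apply Subtype.ext
      simp only [hfbar, hf0, Quotient.lift_mk, hf, if_neg hx]
  have hcard : Nat.card (Quotient S) = Nat.card {q : Quotient T // ¬ q = Quotient.mk T k} :=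
    Nat.card_eq_of_bijective fbar hbij
  have hsplit : Nat.card (Quotient T) =
      Nat.card {q : Quotient T // q = Quotient.mk T k} +
      Nat.card {q : Quotient T // ¬ q = Quotient.mk T k} := by
    rw [← Nat.card_sum]
    exact Nat.card_congr (Equiv.sumCompl _).symm
  have h1 : Nat.card {q : Quotient T // q = Quotient.mk T k} = 1 := by
    rw [Nat.card_eq_one_iff_unique]
    constructor
    · constructor
      rintro ⟨a, rfl⟩ ⟨b, rfl⟩
      rfl
    · exact ⟨⟨_, rfl⟩⟩
  unfold numOrbits
  rw [← hS, ← hT, hcard, hsplit, h1]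
  omega

lemma numOrbits_le (ν : Perm (Fin n)) : numOrbits ν ≤ n := by
  have := Nat.card_le_card_of_surjective _
    (Quotient.mk_surjective (s := orbitSetoid ({ν} : Set (Perm (Fin n)))))
  simpa [numOrbits] using this

lemma numOrbits_one_s16 : numOrbits (1 : Perm (Fin n)) = n := by
  have e : Quotient (orbitSetoid ({1} : Set (Perm (Fin n)))) ≃ Fin n := by
    refine Equiv.ofBijective (Quotient.lift id fun a b h => ?_) ⟨?_, ?_⟩
    · obtain ⟨g, hg, rfl⟩ := h
      rw [Subgroup.closure_singleton_one, Subgroup.mem_bot] at hg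
      subst hg; rfl
    · intro s t hst
      induction s using Quotient.ind with | _ x =>
      induction t using Quotient.ind with | _ y =>
      have : x = y := by simpa using hst
      rw [this]
    · intro x; exact ⟨Quotient.mk _ x, rfl⟩
  rw [numOrbits, Nat.card_congr e]
  simp

lemma len_one : len (1 : Perm (Fin n)) = 0 := by
  simp [len, numOrbits_one_s16]

lemma len_mul_swap (μ : Perm (Fin n)) {k p : Fin n} (hk : μ k = k) (hpk : p ≠ k) :
    len (μ * Equiv.swap p k) = len μ + 1 := by
  have h1 := numOrbits_mul_swap μ k p hk hpk
  have h2 := numOrbits_le μ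
  have h3 := numOrbits_le (μ * Equiv.swap p k)
  simp only [len, Nat.card_eq_fintype_card, Fintype.card_fin]
  omega

end Part1

section Part2
open MonoidAlgebra PowerSeries

variable {n : ℕ}

/-- list-subtype finiteness helper -/
instance listSubtypeFinite (γ : Type*) [Finite γ] (l : ℕ) (P : List γ → Prop) :
    Finite {L : List γ // L.length = l ∧ P L} := by
  haveI : Fintype γ := Fintype.ofFinite γ
  classical
  haveI : Finite {L : List γ // L.length = l} := Finite.of_fintype (List.Vector γ l)
  exact Finite.of_injective (fun x => (⟨x.1, x.2.1⟩ : {L : List γ // L.length = l}))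
    (by rintro ⟨a, b⟩ ⟨c, d⟩ h; simpa [Subtype.ext_iff] using h)

lemma monomial_mul_monomial' {R : Type*} [Semiring R] (m k : ℕ) (a b : R) :
    PowerSeries.monomial m a * PowerSeries.monomial k b =
      PowerSeries.monomial (m + k) (a * b) := by
  simp only [PowerSeries.monomial]
  rw [Finsupp.single_add]
  exact MvPowerSeries.monomial_mul_monomial _ _ _ _

lemma monomial_eq_mk {R : Type*} [Semiring R] (k : ℕ) (a : R) :
    PowerSeries.monomial k a = PowerSeries.mk (fun i => if i = k then a else 0) := by
  ext i
  rw [PowerSeries.coeff_monomial, PowerSeries.coeff_mk]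

lemma commute_mk {R : Type*} [Semiring R] (f g : ℕ → R) (h : ∀ i j, Commute (f i) (g j)) :
    Commute (PowerSeries.mk f) (PowerSeries.mk g) := by
  apply PowerSeries.ext
  intro l
  rw [PowerSeries.coeff_mul, PowerSeries.coeff_mul]
  rw [← Finset.Nat.sum_antidiagonal_swap
    (f := fun p => (PowerSeries.coeff p.1) (PowerSeries.mk f) *
      (PowerSeries.coeff p.2) (PowerSeries.mk g))]
  apply Finset.sum_congr rfl
  intro p _
  simp only [Prod.fst_swap, Prod.snd_swap, PowerSeries.coeff_mk]
  exact (h p.2 p.1).eq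

/-- The Jucys–Murphy element for level `k`. -/
noncomputable def Jel (n k : ℕ) : MonoidAlgebra ℤ (Perm (Fin n)) :=
  if h : k < n then
    ∑ p ∈ Finset.univ.filter (fun p : Fin n => p.val < k),
      MonoidAlgebra.single (Equiv.swap p ⟨k, h⟩) 1
  else 0

noncomputable def Fser (n k : ℕ) : PowerSeries (MonoidAlgebra ℤ (Perm (Fin n))) :=
  1 + PowerSeries.monomial 1 (Jel n k)

noncomputable def Gser (n k : ℕ) : PowerSeries (MonoidAlgebra ℤ (Perm (Fin n))) :=
  PowerSeries.mk fun l => (-(Jel n k)) ^ l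

noncomputable def Wser (n : ℕ) : ℕ → PowerSeries (MonoidAlgebra ℤ (Perm (Fin n)))
  | 0 => 1
  | k + 1 => Wser n k * Gser n k

noncomputable def DD (n k : ℕ) : Finset (Perm (Fin n)) :=
  Finset.univ.filter (fun μ => ∀ x : Fin n, k ≤ x.val → μ x = x)

noncomputable def Eser (n k : ℕ) : PowerSeries (MonoidAlgebra ℤ (Perm (Fin n))) :=
  ∑ μ ∈ DD n k, PowerSeries.monomial (len μ) (MonoidAlgebra.single μ 1)

lemma mem_DD {k : ℕ} {μ : Perm (Fin n)} : μ ∈ DD n k ↔ ∀ x : Fin n, k ≤ x.val → μ x = x := by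
  simp [DD]

lemma DD_inv_fix {k : ℕ} {μ : Perm (Fin n)} (hμ : μ ∈ DD n k) {x : Fin n} (hx : k ≤ x.val) :
    μ⁻¹ x = x := by
  have := mem_DD.mp hμ x hx
  conv_lhs => rw [← this]
  exact μ.inv_apply_self x

lemma DD_lt {k : ℕ} {μ : Perm (Fin n)} (hμ : μ ∈ DD n k) {x : Fin n} (hx : x.val < k) :
    (μ x).val < k := by
  by_contra h
  push_neg at h
  have h2 := mem_DD.mp hμ _ h
  have h3 := μ.injective h2
  rw [h3] at h
  omega

lemma DD_inv_lt {k : ℕ} {μ : Perm (Fin n)} (hμ : μ ∈ DD n k) {x : Fin n} :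
    (μ⁻¹ x).val < k ↔ x.val < k := by
  constructor
  · intro h
    have := DD_lt hμ h
    rwa [μ.apply_inv_self] at this
  · intro h
    by_contra hc
    push_neg at hc
    have h2 := mem_DD.mp hμ _ hc
    rw [μ.apply_inv_self] at h2
    rw [← h2] at hc
    omega

lemma single_commute_Jel {k : ℕ} (hk : k < n) {μ : Perm (Fin n)} (hμ : μ ∈ DD n k) :
    Commute (Jel n k) (MonoidAlgebra.single μ (1 : ℤ)) := by
  classical
  have hμK : μ (⟨k, hk⟩ : Fin n) = ⟨k, hk⟩ := mem_DD.mp hμ _ (le_refl _)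
  have hμKi : μ⁻¹ (⟨k, hk⟩ : Fin n) = ⟨k, hk⟩ := DD_inv_fix hμ (le_refl _)
  unfold Commute SemiconjBy
  rw [Jel, dif_pos hk, Finset.sum_mul, Finset.mul_sum]
  have key : ∀ p : Fin n,
      MonoidAlgebra.single (Equiv.swap p ⟨k, hk⟩) (1:ℤ) * MonoidAlgebra.single μ 1 =
      MonoidAlgebra.single μ (1:ℤ) * MonoidAlgebra.single (Equiv.swap (μ⁻¹ p) ⟨k, hk⟩) 1 := by
    intro p
    rw [MonoidAlgebra.single_mul_single, MonoidAlgebra.single_mul_single, mul_one]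
    congr 1
    have h1 : Equiv.swap (μ⁻¹ p) (μ⁻¹ ⟨k, hk⟩) = μ⁻¹ * Equiv.swap p ⟨k, hk⟩ * μ := by
      have := Equiv.swap_apply_apply (μ⁻¹) p ⟨k, hk⟩
      rwa [inv_inv] at this
    rw [hμKi] at h1
    rw [h1]
    group
  calc ∑ p ∈ Finset.univ.filter (fun p : Fin n => p.val < k),
        MonoidAlgebra.single (Equiv.swap p ⟨k, hk⟩) (1:ℤ) * MonoidAlgebra.single μ 1
      = ∑ p : Fin n, if p.val < k then
          MonoidAlgebra.single μ (1:ℤ) * MonoidAlgebra.single (Equiv.swap (μ⁻¹ p) ⟨k, hk⟩) 1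
          else 0 := by
        rw [Finset.sum_filter]
        exact Finset.sum_congr rfl (fun p _ => by rw [key p])
    _ = ∑ p : Fin n, if (μ⁻¹ p).val < k then
          MonoidAlgebra.single μ (1:ℤ) * MonoidAlgebra.single (Equiv.swap (μ⁻¹ p) ⟨k, hk⟩) 1
          else 0 := by
        exact Finset.sum_congr rfl (fun p _ => if_congr (DD_inv_lt hμ).symm rfl rfl)
    _ = ∑ p : Fin n, if p.val < k then
          MonoidAlgebra.single μ (1:ℤ) * MonoidAlgebra.single (Equiv.swap p ⟨k, hk⟩) 1
          else 0 :=
        Equiv.sum_comp (μ⁻¹ : Perm (Fin n)) (fun q => if q.val < k then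
          MonoidAlgebra.single μ (1:ℤ) * MonoidAlgebra.single (Equiv.swap q ⟨k, hk⟩) 1 else 0)
    _ = ∑ p ∈ Finset.univ.filter (fun p : Fin n => p.val < k),
        MonoidAlgebra.single μ (1:ℤ) * MonoidAlgebra.single (Equiv.swap p ⟨k, hk⟩) 1 := by
        rw [Finset.sum_filter]

lemma geom_mul {R : Type*} [Ring R] (a : R) :
    (PowerSeries.mk fun l => (-a) ^ l) * (1 + PowerSeries.monomial 1 a) = 1 := by
  rw [mul_add, mul_one]
  ext l
  rw [map_add]
  cases l with
  | zero =>
    rw [PowerSeries.coeff_zero_eq_constantCoeff, map_mul]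
    simp [PowerSeries.constantCoeff_mk, ← PowerSeries.coeff_zero_eq_constantCoeff,
      PowerSeries.coeff_monomial]
  | succ l =>
    have h2 : (PowerSeries.coeff (l+1)) ((PowerSeries.mk fun l => (-a) ^ l) *
        PowerSeries.monomial 1 a) = (-a) ^ l * a := by
      rw [PowerSeries.coeff_mul]
      rw [Finset.sum_eq_single (l, 1)]
      · simp [PowerSeries.coeff_mk, PowerSeries.coeff_monomial]
      · rintro ⟨i, j⟩ hmem hne
        rw [Finset.HasAntidiagonal.mem_antidiagonal] at hmem
        rw [PowerSeries.coeff_monomial]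
        rcases eq_or_ne j 1 with rfl | hj
        · exfalso
          apply hne
          have : i = l := by omega
          rw [this]
        · rw [if_neg hj, mul_zero]
      · intro h
        exact absurd (Finset.HasAntidiagonal.mem_antidiagonal.mpr (by omega)) h
    rw [h2, PowerSeries.coeff_mk, PowerSeries.coeff_one, if_neg (Nat.succ_ne_zero l)]
    rw [pow_succ, mul_neg, neg_add_cancel]

lemma Eser_zero : Eser n 0 = 1 := by
  have hDD : DD n 0 = {1} := by
    ext ν
    simp only [mem_DD, Finset.mem_singleton]
    constructor
    · intro h
      ext x : 1
      exact h x (Nat.zero_le _)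
    · rintro rfl x _
      rfl
  rw [Eser, hDD, Finset.sum_singleton, len_one]
  rw [← MonoidAlgebra.one_def, PowerSeries.monomial_zero_eq_C_apply, map_one]

lemma Eser_succ {k : ℕ} (hk : k < n) : Eser n (k + 1) = Eser n k * Fser n k := by
  classical
  rw [Fser, mul_add, mul_one]
  have h2 : Eser n k * PowerSeries.monomial 1 (Jel n k) =
      ∑ x ∈ (DD n k) ×ˢ Finset.univ.filter (fun p : Fin n => p.val < k),
        PowerSeries.monomial (len x.1 + 1)
          (MonoidAlgebra.single (x.1 * Equiv.swap x.2 ⟨k, hk⟩) 1) := by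
    rw [Finset.sum_product]
    rw [Eser, Finset.sum_mul]
    apply Finset.sum_congr rfl
    intro μ hμ
    rw [monomial_mul_monomial', Jel, dif_pos hk, Finset.mul_sum, map_sum]
    apply Finset.sum_congr rfl
    intro p hp
    rw [MonoidAlgebra.single_mul_single, one_mul]
  rw [h2, Eser]
  rw [← Finset.sum_filter_add_sum_filter_not (DD n (k+1))
    (fun ν => ν ⟨k, hk⟩ = ⟨k, hk⟩)]
  congr 1
  · apply Finset.sum_congr ?_ (fun _ _ => rfl)
    ext ν
    simp only [Finset.mem_filter, mem_DD]
    constructor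
    · rintro ⟨h1, h2⟩ x hx
      rcases eq_or_lt_of_le hx with heq | hlt
      · have : x = ⟨k, hk⟩ := Fin.ext heq.symm
        rw [this]; exact h2
      · exact h1 x hlt
    · intro h
      exact ⟨fun x hx => h x (by omega), h _ (le_refl _)⟩
  · symm
    apply Finset.sum_nbij' (fun x => x.1 * Equiv.swap x.2 ⟨k, hk⟩)
      (fun ν => (ν * Equiv.swap (ν⁻¹ ⟨k, hk⟩) ⟨k, hk⟩, ν⁻¹ ⟨k, hk⟩))
    · rintro ⟨μ, p⟩ hmem
      rw [Finset.mem_product] at hmem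
      obtain ⟨hμ, hp⟩ := hmem
      rw [Finset.mem_filter] at hp ⊢
      refine ⟨?_, ?_⟩
      · rw [mem_DD]
        intro x hx
        have hxp : x ≠ p := by
          intro h; rw [h] at hx; simp at hp; omega
        have hxK : x ≠ ⟨k, hk⟩ := by
          intro h; rw [h] at hx; simp at hx
        rw [Equiv.Perm.mul_apply, Equiv.swap_apply_of_ne_of_ne hxp hxK]
        exact mem_DD.mp hμ x (by omega)
      · rw [Equiv.Perm.mul_apply, Equiv.swap_apply_right]
        intro h
        have hlt : (μ p).val < k := DD_lt hμ (by simpa using hp)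
        rw [h] at hlt
        simp at hlt
    · intro ν hν
      rw [Finset.mem_filter] at hν
      obtain ⟨hν1, hν2⟩ := hν
      have hp' : (ν⁻¹ ⟨k, hk⟩ : Fin n).val < k := by
        rcases lt_or_ge (ν⁻¹ ⟨k, hk⟩ : Fin n).val k with h | h
        · exact h
        rcases eq_or_lt_of_le h with heq | hlt
        · exfalso
          have hKK : (ν⁻¹ ⟨k, hk⟩ : Fin n) = ⟨k, hk⟩ := Fin.ext heq.symm
          apply hν2
          conv_lhs => rw [← hKK]
          exact Equiv.Perm.apply_inv_self ν _
        · exfalso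
          have := mem_DD.mp hν1 _ (by omega : k + 1 ≤ (ν⁻¹ ⟨k, hk⟩ : Fin n).val)
          rw [Equiv.Perm.apply_inv_self] at this
          rw [← this] at hlt
          exact absurd hlt (by simp)
      rw [Finset.mem_product]
      constructor
      · rw [mem_DD]
        intro x hx
        rcases eq_or_lt_of_le hx with heq | hlt
        · have hxK : x = ⟨k, hk⟩ := Fin.ext heq.symm
          subst hxK
          rw [Equiv.Perm.mul_apply, Equiv.swap_apply_right, Equiv.Perm.apply_inv_self]
        · have hxp : x ≠ ν⁻¹ ⟨k, hk⟩ := by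
            intro h; rw [h] at hlt; omega
          have hxK : x ≠ ⟨k, hk⟩ := by
            intro h; rw [h] at hlt; simp at hlt
          rw [Equiv.Perm.mul_apply, Equiv.swap_apply_of_ne_of_ne hxp hxK]
          exact mem_DD.mp hν1 x (by omega)
      · rw [Finset.mem_filter]
        exact ⟨Finset.mem_univ _, hp'⟩
    · rintro ⟨μ, p⟩ hmem
      rw [Finset.mem_product] at hmem
      obtain ⟨hμ, hp⟩ := hmem
      have h1 : ((μ * Equiv.swap p ⟨k, hk⟩)⁻¹ ⟨k, hk⟩ : Fin n) = p := by
        rw [mul_inv_rev, Equiv.Perm.mul_apply]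
        rw [DD_inv_fix hμ (le_refl _)]
        simp
      rw [h1]
      ext : 1
      · rw [mul_assoc, Equiv.swap_mul_self, mul_one]
      · rfl
    · intro ν hν
      dsimp only
      rw [mul_assoc, Equiv.swap_mul_self, mul_one]
    · rintro ⟨μ, p⟩ hmem
      rw [Finset.mem_product] at hmem
      obtain ⟨hμ, hp⟩ := hmem
      rw [Finset.mem_filter] at hp
      have := len_mul_swap μ (mem_DD.mp hμ _ (le_refl _) : μ ⟨k, hk⟩ = ⟨k, hk⟩)
        (by intro h; rw [h] at hp; simp at hp : p ≠ ⟨k, hk⟩)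
      rw [this]

lemma Gser_commute_Eser {k : ℕ} (hk : k < n) : Commute (Gser n k) (Eser n k) := by
  apply Commute.sum_right
  intro μ hμ
  rw [monomial_eq_mk, Gser]
  apply commute_mk
  intro i j
  split
  · exact ((single_commute_Jel hk hμ).neg_left).pow_left i
  · exact Commute.zero_right _

lemma Wser_mul_Eser (k : ℕ) (hk : k ≤ n) : Wser n k * Eser n k = 1 := by
  induction k with
  | zero => rw [Eser_zero, mul_one]; rfl
  | succ k ih =>
    have hkn : k < n := by omega
    have hGF : Gser n k * Fser n k = 1 := geom_mul (Jel n k)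
    rw [show Wser n (k+1) = Wser n k * Gser n k from rfl, Eser_succ hkn]
    rw [mul_assoc, ← mul_assoc (Gser n k), (Gser_commute_Eser hkn).eq,
      mul_assoc (Eser n k), hGF, mul_one]
    exact ih (by omega)

/-- Monotone pq-sequences with tops `< k`, length `l`, product `ν`. -/
def Mpq (n k : ℕ) (ν : Perm (Fin n)) (l : ℕ) : Type :=
  {pq : List (Fin n × Fin n) // pq.length = l ∧
    ((∀ x ∈ pq, x.1 < x.2 ∧ x.2.val < k) ∧
     List.Chain' (· ≤ ·) (pq.map Prod.snd) ∧
     (pq.map (fun x => Equiv.swap x.1 x.2)).prod = ν)}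

instance (k : ℕ) (ν : Perm (Fin n)) (l : ℕ) : Finite (Mpq n k ν l) :=
  listSubtypeFinite _ _ _

noncomputable def pkN (n k : ℕ) (ν : Perm (Fin n)) (l : ℕ) : ℕ := Nat.card (Mpq n k ν l)

lemma pkN_zero (k : ℕ) (ν : Perm (Fin n)) :
    pkN n k ν 0 = if ν = 1 then 1 else 0 := by
  rcases eq_or_ne ν 1 with rfl | hν
  · rw [if_pos rfl]
    haveI : Nonempty (Mpq n k 1 0) :=
      ⟨⟨[], rfl, by simp, by exact List.isChain_nil, by simp⟩⟩
    haveI : Subsingleton (Mpq n k 1 0) := by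
      constructor
      rintro ⟨a, ha, _⟩ ⟨b, hb, _⟩
      apply Subtype.ext
      exact (List.eq_nil_of_length_eq_zero ha).trans (List.eq_nil_of_length_eq_zero hb).symm
    exact Nat.card_unique
  · rw [if_neg hν]
    haveI : IsEmpty (Mpq n k ν 0) := by
      constructor
      rintro ⟨pq, h1, _, _, h4⟩
      rw [List.eq_nil_of_length_eq_zero h1] at h4
      simp at h4
      exact hν h4.symm
    exact Nat.card_of_isEmpty

lemma pkN_k_zero (ν : Perm (Fin n)) (l : ℕ) :
    pkN n 0 ν (l + 1) = 0 := by
  haveI : IsEmpty (Mpq n 0 ν (l+1)) := by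
    constructor
    rintro ⟨pq, h1, h2, _, _⟩
    cases pq with
    | nil => simp at h1
    | cons x xs => exact absurd (h2 x (List.mem_cons_self)).2 (by omega)
  exact Nat.card_of_isEmpty

lemma chain'_le_getLast {γ : Type*} [LinearOrder γ] {L : List γ}
    (hc : List.Chain' (· ≤ ·) L) (hne : L ≠ []) : ∀ a ∈ L, a ≤ L.getLast hne := by
  induction L with
  | nil => exact absurd rfl hne
  | cons x xs ih =>
    intro a ha
    cases xs with
    | nil =>
      rw [List.mem_singleton] at ha
      subst ha
      rfl
    | cons y ys =>
      rw [List.getLast_cons (by simp : (y :: ys) ≠ [])]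
      rcases List.mem_cons.mp ha with rfl | ha'
      · have h1 : a ≤ y := (List.isChain_cons_cons.mp hc).1
        have h2 := ih (List.isChain_cons_cons.mp hc).2 (by simp) y (List.mem_cons_self)
        exact le_trans h1 h2
      · exact ih (List.isChain_cons_cons.mp hc).2 (by simp) a ha'

lemma pkN_rec {k l : ℕ} (hk : k < n) (ν : Perm (Fin n)) :
    pkN n (k+1) ν (l+1) = pkN n k ν (l+1) +
      ∑ p ∈ Finset.univ.filter (fun p : Fin n => p.val < k),
        pkN n (k+1) (ν * Equiv.swap p ⟨k, hk⟩) l := by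
  classical
  have hne : ∀ x : Mpq n (k+1) ν (l+1), x.1 ≠ [] := by
    intro x
    apply List.ne_nil_of_length_pos
    rw [x.2.1]; omega
  have hinj : ∀ (a b : Σ p : {p : Fin n // p.val < k},
      Mpq n (k+1) (ν * Equiv.swap (p : Fin n) ⟨k, hk⟩) l),
      (a.1 : Fin n) = (b.1 : Fin n) → a.2.1 = b.2.1 → a = b := by
    rintro ⟨⟨a1, ha⟩, ⟨a2, hA⟩⟩ ⟨⟨b1, hb⟩, ⟨b2, hB⟩⟩ h1 h2
    dsimp at h1 h2
    subst h1
    subst h2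
    rfl
  have e : Mpq n (k+1) ν (l+1) ≃
      Mpq n k ν (l+1) ⊕
      (Σ p : {p : Fin n // p.val < k}, Mpq n (k+1) (ν * Equiv.swap (p : Fin n) ⟨k, hk⟩) l) := by
    refine ⟨fun x => ?_, fun y => ?_, ?_, ?_⟩
    · -- forward
      refine if hz : (x.1.getLast (hne x)).2.val < k then Sum.inl ⟨x.1, x.2.1, ?_, x.2.2.2⟩
        else Sum.inr ⟨⟨(x.1.getLast (hne x)).1, ?_⟩, ⟨x.1.dropLast, ?_, ?_, ?_, ?_⟩⟩
      · -- all tops < k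
        intro y hy
        refine ⟨(x.2.2.1 y hy).1, ?_⟩
        have h1 : y.2 ≤ (x.1.getLast (hne x)).2 := by
          have h2 := chain'_le_getLast x.2.2.2.1
            (by intro h; exact hne x (List.map_eq_nil_iff.mp h)) y.2
            (List.mem_map_of_mem (f := Prod.snd) hy)
          rwa [List.getLast_map] at h2
        have := Fin.le_def.mp h1
        omega
      · -- (getLast).1.val < k
        have hmem := List.getLast_mem (hne x)
        have h1 := (x.2.2.1 _ hmem).1
        have h2 := (x.2.2.1 _ hmem).2
        have h3 := Fin.lt_def.mp h1
        have h4 : ((x.1.getLast (hne x)).2 : Fin n).val = k := by omega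
        omega
      · rw [List.length_dropLast, x.2.1]; omega
      · intro y hy
        exact x.2.2.1 y (List.dropLast_subset _ hy)
      · rw [List.map_dropLast]
        exact x.2.2.2.1.prefix ((x.1.map Prod.snd).dropLast_prefix)
      · -- product condition
        have hz2 : (x.1.getLast (hne x)).2 = ⟨k, hk⟩ := by
          have hmem := List.getLast_mem (hne x)
          have h2 := (x.2.2.1 _ hmem).2
          have h4 : ((x.1.getLast (hne x)).2 : Fin n).val = k := by omega
          exact Fin.ext h4
        have hsp : x.1.dropLast ++ [x.1.getLast (hne x)] = x.1 :=
          List.dropLast_append_getLast (hne x)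
        have hprod := x.2.2.2.2
        rw [← hsp, List.map_append, List.prod_append] at hprod
        simp only [List.map_cons, List.map_nil, List.prod_cons, List.prod_nil, mul_one] at hprod
        have h5 : ((List.map (fun x => Equiv.swap x.1 x.2) x.1.dropLast).prod *
            Equiv.swap ((x.1.getLast (hne x)).1) ((x.1.getLast (hne x)).2)) *
            Equiv.swap ((x.1.getLast (hne x)).1) ((x.1.getLast (hne x)).2) =
            ν * Equiv.swap ((x.1.getLast (hne x)).1) ((x.1.getLast (hne x)).2) := by
          rw [hprod]
        rw [mul_assoc, Equiv.swap_mul_self, mul_one] at h5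
        rw [hz2] at h5
        exact h5
    · -- backward
      rcases y with q | ⟨p, q⟩
      · exact ⟨q.1, q.2.1, fun y hy => ⟨(q.2.2.1 y hy).1, by have := (q.2.2.1 y hy).2; omega⟩,
          q.2.2.2.1, q.2.2.2.2⟩
      · refine ⟨q.1 ++ [((p : Fin n), (⟨k, hk⟩ : Fin n))], ?_, ?_, ?_, ?_⟩
        · rw [List.length_append, q.2.1]; rfl
        · intro y hy
          rcases List.mem_append.mp hy with h | h
          · exact q.2.2.1 y h
          · rw [List.mem_singleton] at h
            subst h
            refine ⟨?_, ?_⟩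
            · show (p : Fin n) < (⟨k, hk⟩ : Fin n)
              exact Fin.lt_def.mpr (by simpa using p.2)
            · show ((⟨k, hk⟩ : Fin n)).val < k + 1
              simp
        · rw [List.map_append]; apply List.isChain_append.mpr
          refine ⟨q.2.2.2.1, List.isChain_singleton _, ?_⟩
          intro a ha b hb
          simp only [List.map_cons, List.map_nil, List.head?_cons, Option.mem_def,
            Option.some_inj] at hb
          subst hb
          obtain ⟨hh, heq⟩ := List.mem_getLast?_eq_getLast ha
          subst heq
          have hmem : (q.1.map Prod.snd).getLast hh ∈ q.1.map Prod.snd := List.getLast_mem hh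
          obtain ⟨y, hy, hy2⟩ := List.mem_map.mp hmem
          rw [← hy2]
          have := (q.2.2.1 y hy).2
          have he : ((⟨k, hk⟩ : Fin n)).val = k := rfl
          exact Fin.le_def.mpr (by omega)
        · rw [List.map_append, List.prod_append]
          simp only [List.map_cons, List.map_nil, List.prod_cons, List.prod_nil, mul_one]
          rw [q.2.2.2.2, mul_assoc, Equiv.swap_mul_self, mul_one]
    · -- left inverse
      intro x
      by_cases hz : (x.1.getLast (hne x)).2.val < k
      · simp only [dif_pos hz]
        rfl
      · simp only [dif_neg hz]
        apply Subtype.ext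
        dsimp only
        have hz2 : (x.1.getLast (hne x)).2 = ⟨k, hk⟩ := by
          have hmem := List.getLast_mem (hne x)
          have h2 := (x.2.2.1 _ hmem).2
          have h4 : ((x.1.getLast (hne x)).2 : Fin n).val = k := by omega
          exact Fin.ext h4
        conv_lhs => rw [← hz2]
        rw [show ((x.1.getLast (hne x)).1, (x.1.getLast (hne x)).2) = x.1.getLast (hne x)
          from rfl]
        exact List.dropLast_append_getLast (hne x)
    · -- right inverse
      rintro (q | ⟨p, q⟩)
      · have hz : ∀ h, ((q.1.getLast h : Fin n × Fin n)).2.val < k := by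
          intro h
          exact (q.2.2.1 _ (List.getLast_mem h)).2
        simp only [dif_pos (hz _)]
        rfl
      · dsimp only
        have hlast : ∀ h, (q.1 ++ [((p : Fin n), (⟨k, hk⟩ : Fin n))]).getLast h
            = ((p : Fin n), (⟨k, hk⟩ : Fin n)) := by
          intro h
          exact List.getLast_append _
        have hcond : ¬ ((q.1 ++ [((p : Fin n), (⟨k, hk⟩ : Fin n))]).getLast
            (by simp)).2.val < k := by
          rw [hlast]
          simp
        rw [dif_neg]
        swap
        · rw [hlast]; simp
        apply congrArg Sum.inr
        apply hinj
        · dsimp only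
          rw [hlast]
        · dsimp only
          rw [List.dropLast_concat]
  -- counting
  haveI : ∀ p : {p : Fin n // p.val < k},
      Fintype (Mpq n (k+1) (ν * Equiv.swap (p : Fin n) ⟨k, hk⟩) l) := fun p => Fintype.ofFinite _
  haveI : Fintype {p : Fin n // p.val < k} := Fintype.ofFinite _
  have h1 : pkN n (k+1) ν (l+1) = pkN n k ν (l+1) +
      Nat.card (Σ p : {p : Fin n // p.val < k},
        Mpq n (k+1) (ν * Equiv.swap (p : Fin n) ⟨k, hk⟩) l) := by
    rw [pkN, Nat.card_congr e, Nat.card_sum]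
    rfl
  rw [h1]
  congr 1
  rw [Nat.card_eq_fintype_card, Fintype.card_sigma]
  rw [Finset.sum_subtype (p := fun p : Fin n => p.val < k) (Finset.univ.filter (fun p : Fin n => p.val < k))
    (by intro x; simp) (fun p => pkN n (k+1) (ν * Equiv.swap p ⟨k, hk⟩) l)]
  apply Finset.sum_congr rfl
  intro p _
  rw [pkN, Nat.card_eq_fintype_card]

lemma coeff_mul_monomial_one {R : Type*} [Semiring R] (f : PowerSeries R) (a : R) (l : ℕ) :
    PowerSeries.coeff l (f * PowerSeries.monomial 1 a) =
      if 1 ≤ l then PowerSeries.coeff (l - 1) f * a else 0 := by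
  rw [PowerSeries.coeff_mul]
  cases l with
  | zero =>
    rw [if_neg (by omega)]
    apply Finset.sum_eq_zero
    rintro ⟨i, j⟩ hmem
    rw [Finset.HasAntidiagonal.mem_antidiagonal] at hmem
    rw [PowerSeries.coeff_monomial, if_neg (by omega), mul_zero]
  | succ l =>
    rw [if_pos (by omega)]
    rw [Finset.sum_eq_single (l, 1)]
    · simp [PowerSeries.coeff_monomial]
    · rintro ⟨i, j⟩ hmem hne
      rw [Finset.HasAntidiagonal.mem_antidiagonal] at hmem
      rw [PowerSeries.coeff_monomial]
      rcases eq_or_ne j 1 with rfl | hj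
      · exfalso
        apply hne
        have : i = l := by omega
        rw [this]
      · rw [if_neg hj, mul_zero]
    · intro h
      exact absurd (Finset.HasAntidiagonal.mem_antidiagonal.mpr (by omega)) h

lemma Gser_rec (k : ℕ) :
    Gser n k = 1 - Gser n k * PowerSeries.monomial 1 (Jel n k) := by
  ext l
  rw [map_sub, coeff_mul_monomial_one]
  cases l with
  | zero => simp [Gser, PowerSeries.coeff_mk]
  | succ l =>
    rw [Gser, PowerSeries.coeff_mk, PowerSeries.coeff_mk, if_pos (by omega),
      PowerSeries.coeff_one, if_neg (by omega)]
    simp only [Nat.add_sub_cancel]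
    rw [pow_succ, mul_neg, zero_sub]

lemma Wser_rec (k : ℕ) :
    Wser n (k + 1) = Wser n k - Wser n (k + 1) * PowerSeries.monomial 1 (Jel n k) := by
  conv_lhs => rw [show Wser n (k+1) = Wser n k * Gser n k from rfl, Gser_rec k]
  rw [mul_sub, mul_one, ← mul_assoc]
  rfl

lemma one_apply' (σ : Perm (Fin n)) : (1 : MonoidAlgebra ℤ (Perm (Fin n))).coeff σ =
    if σ = 1 then 1 else 0 := by
  rw [MonoidAlgebra.one_def, MonoidAlgebra.coeff_single, Finsupp.single_apply]
  by_cases h : σ = 1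
  · rw [if_pos h, if_pos h.symm]
  · rw [if_neg h, if_neg (fun hh => h hh.symm)]

lemma mul_Jel_apply {k : ℕ} (hk : k < n) (a : MonoidAlgebra ℤ (Perm (Fin n)))
    (ν : Perm (Fin n)) :
    (a * Jel n k).coeff ν = ∑ p ∈ Finset.univ.filter (fun p : Fin n => p.val < k),
      a.coeff (ν * Equiv.swap p ⟨k, hk⟩) := by
  rw [Jel, dif_pos hk, Finset.mul_sum, MonoidAlgebra.coeff_sum, Finsupp.finset_sum_apply]
  apply Finset.sum_congr rfl
  intro p _
  rw [MonoidAlgebra.mul_single_apply, mul_one, Equiv.swap_inv]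

lemma coeff_Wser {k : ℕ} (hk : k ≤ n) (l : ℕ) (ν : Perm (Fin n)) :
    (PowerSeries.coeff l (Wser n k)).coeff ν = (-1 : ℤ) ^ l * pkN n k ν l := by
  induction k generalizing l ν with
  | zero =>
    rw [show Wser n 0 = 1 from rfl, PowerSeries.coeff_one]
    cases l with
    | zero =>
      rw [if_pos rfl, pkN_zero, one_apply', pow_zero, one_mul]
      split <;> simp
    | succ l =>
      rw [if_neg (by omega), pkN_k_zero]
      simp
  | succ k ih =>
    have hkn : k < n := by omega
    induction l using Nat.strong_induction_on generalizing ν with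
    | _ l ihl =>
      rw [Wser_rec k, map_sub, MonoidAlgebra.coeff_sub, Finsupp.sub_apply, coeff_mul_monomial_one]
      cases l with
      | zero =>
        rw [if_neg (by omega), MonoidAlgebra.coeff_zero, Finsupp.zero_apply, sub_zero, ih (by omega), pkN_zero, pkN_zero]
      | succ l =>
        rw [if_pos (by omega)]
        simp only [Nat.add_sub_cancel]
        rw [ih (by omega), mul_Jel_apply hkn]
        have hsum : ∑ p ∈ Finset.univ.filter (fun p : Fin n => p.val < k),
            (PowerSeries.coeff l (Wser n (k+1))).coeff (ν * Equiv.swap p ⟨k, hkn⟩) =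
            ∑ p ∈ Finset.univ.filter (fun p : Fin n => p.val < k),
            (-1 : ℤ) ^ l * pkN n (k+1) (ν * Equiv.swap p ⟨k, hkn⟩) l :=
          Finset.sum_congr rfl (fun p _ => ihl l (by omega) _)
        rw [hsum, pkN_rec hkn ν]
        push_cast
        rw [mul_add, Finset.mul_sum, sub_eq_add_neg, ← Finset.sum_neg_distrib]
        congr 1
        apply Finset.sum_congr rfl
        intro p _
        ring

lemma swap_pair_unique {a b c d : Fin n} (hab : a < b) (hcd : c < d)
    (h : Equiv.swap a b = Equiv.swap c d) : a = c ∧ b = d := by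
  have h1 : Equiv.swap c d a = b := by rw [← h]; exact Equiv.swap_apply_left a b
  rcases eq_or_ne a c with rfl | hac
  · rw [Equiv.swap_apply_left] at h1
    exact ⟨rfl, h1.symm⟩
  · rcases eq_or_ne a d with rfl | had
    · rw [Equiv.swap_apply_right] at h1
      exfalso
      rw [← h1] at hab
      exact absurd hcd (lt_asymm hab)
    · rw [Equiv.swap_apply_of_ne_of_ne hac had] at h1
      exact absurd h1 (ne_of_lt hab)

lemma map_swap_inj : ∀ (pq1 pq2 : List (Fin n × Fin n)), (∀ x ∈ pq1, x.1 < x.2) →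
    (∀ x ∈ pq2, x.1 < x.2) →
    pq1.map (fun x => Equiv.swap x.1 x.2) = pq2.map (fun x => Equiv.swap x.1 x.2) →
    pq1 = pq2 := by
  intro pq1
  induction pq1 with
  | nil =>
    intro pq2 _ _ h
    cases pq2 with
    | nil => rfl
    | cons y ys => simp at h
  | cons x xs ih =>
    intro pq2 h1 h2 h
    cases pq2 with
    | nil => simp at h
    | cons y ys =>
      simp only [List.map_cons, List.cons.injEq] at h
      have hx := h1 x (List.mem_cons_self)
      have hy := h2 y (List.mem_cons_self)
      obtain ⟨e1, e2⟩ := swap_pair_unique hx hy h.1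
      have : x = y := Prod.ext e1 e2
      rw [this, ih ys (fun z hz => h1 z (List.mem_cons_of_mem _ hz))
        (fun z hz => h2 z (List.mem_cons_of_mem _ hz)) h.2]

lemma map_swap_congr {i j : DecidableEq (Fin n)} (pq : List (Fin n × Fin n)) :
    pq.map (fun x => @Equiv.swap _ i x.1 x.2) = pq.map (fun x => @Equiv.swap _ j x.1 x.2) := by
  have h : i = j := Subsingleton.elim _ _
  subst h
  rfl

lemma pNum_eq_pkN (ν : Perm (Fin n)) (l : ℕ) : pNum ν l = pkN n n ν l := by
  symm
  apply Nat.card_eq_of_bijective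
    (f := fun y : Mpq n n ν l =>
      (⟨y.1.map (fun z => Equiv.swap z.1 z.2),
        by rw [List.length_map, y.2.1],
        ⟨y.1, map_swap_congr y.1, fun z hz => (y.2.2.1 z hz).1, y.2.2.2.1⟩,
        y.2.2.2.2⟩ :
      {L : List (Perm (Fin n)) // L.length = l ∧ IsMonotoneSeq L ∧ L.prod = ν}))
  constructor
  · intro y1 y2 h
    apply Subtype.ext
    have h2 : y1.1.map (fun z => Equiv.swap z.1 z.2) = y2.1.map (fun z => Equiv.swap z.1 z.2) :=
      congrArg Subtype.val h
    exact map_swap_inj _ _ (fun z hz => (y1.2.2.1 z hz).1) (fun z hz => (y2.2.2.1 z hz).1) h2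
  · intro x
    obtain ⟨pq, hL, hlt, hchain⟩ := x.2.2.1
    rw [map_swap_congr (j := instDecidableEqFin n)] at hL
    have hlen : pq.length = l := by
      have := congrArg List.length hL
      rw [List.length_map] at this
      rw [← this, x.2.1]
    refine ⟨⟨pq, hlen, fun z hz => ⟨hlt z hz, z.2.isLt⟩, hchain, ?_⟩, ?_⟩
    · rw [← hL]
      exact x.2.2.2
    · apply Subtype.ext
      exact hL.symm

lemma antidiag_pick {M : Type*} [AddCommMonoid M] (m c : ℕ) (g : ℕ → M) :
    ∑ x ∈ Finset.HasAntidiagonal.antidiagonal m, (if x.2 = c then g x.1 else 0) =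
      if c ≤ m then g (m - c) else 0 := by
  rcases le_or_gt c m with h | h
  · rw [if_pos h, Finset.sum_eq_single (m - c, c)]
    · rw [if_pos rfl]
    · rintro ⟨i, j⟩ hmem hne
      rw [Finset.HasAntidiagonal.mem_antidiagonal] at hmem
      dsimp only
      rcases eq_or_ne j c with rfl | hj
      · exfalso
        apply hne
        have : i = m - j := by omega
        rw [this]
      · rw [if_neg hj]
    · intro hmem
      exact absurd (Finset.HasAntidiagonal.mem_antidiagonal.mpr (by omega)) hmem
  · rw [if_neg (by omega)]
    apply Finset.sum_eq_zero
    rintro ⟨i, j⟩ hmem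
    rw [Finset.HasAntidiagonal.mem_antidiagonal] at hmem
    dsimp only
    rw [if_neg (by omega)]

lemma DD_top : DD n n = Finset.univ := by
  ext μ
  simp only [mem_DD, Finset.mem_univ, iff_true]
  intro x hx
  exact absurd x.isLt (by omega)

theorem statement16' {n : ℕ} (σ : Equiv.Perm (Fin n)) (m : ℕ) :
    (∑ ν : Equiv.Perm (Fin n),
      if len (ν⁻¹ * σ) ≤ m then
        (-1 : ℤ) ^ (m - len (ν⁻¹ * σ)) * pNum ν (m - len (ν⁻¹ * σ))
      else 0)
    = if σ = 1 ∧ m = 0 then 1 else 0 := by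
  classical
  have hWE : Wser n n * Eser n n = 1 := Wser_mul_Eser n (le_refl n)
  have key : ∀ x : ℕ × ℕ,
      ((PowerSeries.coeff x.1 (Wser n n)) * (PowerSeries.coeff x.2 (Eser n n))).coeff σ =
      ∑ μ : Perm (Fin n),
        (if x.2 = len μ then (-1 : ℤ) ^ x.1 * pNum (σ * μ⁻¹) x.1 else 0) := by
    intro x
    have hE : (PowerSeries.coeff x.2 (Eser n n)) =
        ∑ μ : Perm (Fin n), if x.2 = len μ then MonoidAlgebra.single μ (1 : ℤ) else 0 := by
      rw [Eser, DD_top, map_sum]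
      exact Finset.sum_congr rfl (fun μ _ => PowerSeries.coeff_monomial _ _ _)
    rw [hE, Finset.mul_sum, MonoidAlgebra.coeff_sum, Finsupp.finset_sum_apply]
    apply Finset.sum_congr rfl
    intro μ _
    rw [mul_ite, mul_zero, apply_ite (fun f : MonoidAlgebra ℤ (Perm (Fin n)) => f.coeff σ),
      MonoidAlgebra.coeff_zero, Finsupp.zero_apply, MonoidAlgebra.mul_single_apply, mul_one]
    congr 1
    rw [coeff_Wser (le_refl n), pNum_eq_pkN]
  calc (∑ ν : Equiv.Perm (Fin n),
      if len (ν⁻¹ * σ) ≤ m then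
        (-1 : ℤ) ^ (m - len (ν⁻¹ * σ)) * pNum ν (m - len (ν⁻¹ * σ))
      else 0)
      = ∑ ν : Perm (Fin n), ∑ x ∈ Finset.HasAntidiagonal.antidiagonal m,
          (if x.2 = len (ν⁻¹ * σ) then (-1 : ℤ) ^ x.1 * pNum ν x.1 else 0) :=
        Finset.sum_congr rfl (fun ν _ =>
          (antidiag_pick m (len (ν⁻¹ * σ)) (fun i => (-1 : ℤ) ^ i * pNum ν i)).symm)
    _ = ∑ μ : Perm (Fin n), ∑ x ∈ Finset.HasAntidiagonal.antidiagonal m,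
          (if x.2 = len μ then (-1 : ℤ) ^ x.1 * pNum (σ * μ⁻¹) x.1 else 0) := by
        apply Fintype.sum_equiv ((Equiv.inv (Perm (Fin n))).trans (Equiv.mulRight σ))
        intro ν
        apply Finset.sum_congr rfl
        intro x _
        have h1 : ((Equiv.inv (Perm (Fin n))).trans (Equiv.mulRight σ)) ν = ν⁻¹ * σ := rfl
        rw [h1, show σ * (ν⁻¹ * σ)⁻¹ = ν by group]
    _ = ∑ x ∈ Finset.HasAntidiagonal.antidiagonal m, ∑ μ : Perm (Fin n),
          (if x.2 = len μ then (-1 : ℤ) ^ x.1 * pNum (σ * μ⁻¹) x.1 else 0) :=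
        Finset.sum_comm
    _ = ∑ x ∈ Finset.HasAntidiagonal.antidiagonal m,
          ((PowerSeries.coeff x.1 (Wser n n)) * (PowerSeries.coeff x.2 (Eser n n))).coeff σ :=
        Finset.sum_congr rfl (fun x _ => (key x).symm)
    _ = (PowerSeries.coeff m (Wser n n * Eser n n)).coeff σ := by
        rw [PowerSeries.coeff_mul, MonoidAlgebra.coeff_sum, Finsupp.finset_sum_apply]
    _ = if σ = 1 ∧ m = 0 then 1 else 0 := by
        rw [hWE, PowerSeries.coeff_one,
          apply_ite (fun f : MonoidAlgebra ℤ (Perm (Fin n)) => f.coeff σ),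
          MonoidAlgebra.coeff_zero, Finsupp.zero_apply, one_apply']
        by_cases h1 : m = 0 <;> by_cases h2 : σ = 1 <;> simp [h1, h2]

end Part2

/-- the monotone generating function is a convolution pseudo-inverse of
`ν ↦ N^{#(ν)}` on the symmetric group: for every `m`,
`∑_{ν, ‖ν⁻¹σ‖ ≤ m} (−1)^{m−‖ν⁻¹σ‖} p(ν; m−‖ν⁻¹σ‖) = [σ = id ∧ m = 0]`. -/
theorem statement16 {n : ℕ} (hn : 1 ≤ n) (σ : Equiv.Perm (Fin n)) (m : ℕ) :
    (∑ ν : Equiv.Perm (Fin n),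
      if len (ν⁻¹ * σ) ≤ m then
        (-1 : ℤ) ^ (m - len (ν⁻¹ * σ)) * pNum ν (m - len (ν⁻¹ * σ))
      else 0)
    = if σ = 1 ∧ m = 0 then 1 else 0 := by
  exact statement16' σ m

end PaperHCIZ
end
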